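/- arXiv:1711.06869 — 7 statements merged into one kernel-verified Lean document; each statement's English description precedes it below -/
import Mathlib

section
/- Let n ≥ 1, let Θ ∈ ℝⁿ be a row-stochastic vector with all entries positive, and let C be a fixed symmetric irreducible n×n matrix with entries in {0,1} and all diagonal entries equal to 1. For each integer k ≥ k₀ let P_k and S_k be n×n row-stochastic matrices and let W_k be the diagonal matrix with diagonal entries ω_k[i] = e^{−τk}·G_k[i], where τ > 0 and G_k[i] ∈ [0,1] (so ω_k[i] ∈ [0,1)), and set M_k = (I − W_k)P_k + W_k S_k. Assume that for every k: (i) P_k[i,i] > 0 for all i; (ii) Θ P_k = Θ; (iii) P_k[i,l] > 0 if C[i,l] = 1 and P_k[i,l] = 0 if C[i,l] = 0; and (iv) there exists γ > 0, independent of k, such that every positive entry of every M_k is at least γ. Then for every row-stochastic vector x_{k₀} ∈ ℝⁿ, the products x_{k₀}·M_{k₀}·M_{k₀+1}⋯M_{k−1} converge entrywise to Θ as k → ∞. -/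
/-!
Write `yₖ` for the distribution at time `k` and `‖·‖` for the `ℓ¹` norm. Every `Mₖ` is
row-stochastic, hence `ℓ¹`-nonexpansive, and `Θ` is almost invariant under it: since `Θ Pₖ = Θ`,
`‖Θ Mₖ - Θ‖ ≤ 2 maxᵢ ωₖ[i] → 0`. Once `ωₖ < 1`, the matrix `Mₖ` dominates `γ C` entrywise, and
`C` is irreducible with positive diagonal, hence primitive: some `C ^ m` is entrywise positive.
So every product of `m` consecutive `Mₖ` has all entries at least some `δ > 0`, and by
Dobrushin's estimate it contracts zero-sum vectors by the factor `1 - nδ`. Therefore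
`aₖ = ‖yₖ - Θ‖` satisfies `a_{k+m} ≤ (1 - nδ) aₖ + o(1)`, which forces `aₖ → 0`.
-/

open Finset Filter Topology

theorem tendsto_zero_of_le_mul_add {a c : ℕ → ℝ} {θ B : ℝ} {m : ℕ} (hθ : θ < 1)
    (ha : ∀ k, 0 ≤ a k) (hB : ∀ k, a k ≤ B) (hc : Tendsto c atTop (𝓝 0))
    (hrec : ∀ᶠ k in atTop, a (k + m) ≤ θ * a k + c k) : Tendsto a atTop (𝓝 0) := by
  wlog hθ₀ : 0 ≤ θ generalizing θ
  · exact this zero_lt_one (hrec.mono fun k hk => hk.trans (by nlinarith [ha k])) le_rfl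
  rw [Metric.tendsto_atTop]
  intro ε hε
  obtain ⟨K, hK⟩ := eventually_atTop.1 <| hrec.and <|
    hc.eventually (ge_mem_nhds (by positivity : (0 : ℝ) < (1 - θ) * (ε / 2)))
  -- once `c k ≤ (1 - θ) * (ε / 2)`, the bound `θ ^ J * B + ε / 2` survives one more step
  have hiter : ∀ J k, K ≤ k → a (k + J * m) ≤ θ ^ J * B + ε / 2 := by
    intro J k hk
    induction J with
    | zero => simpa using (hB k).trans (le_add_of_nonneg_right (by positivity))
    | succ J ih =>
      obtain ⟨hstep, hck⟩ := hK (k + J * m) (by omega)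
      calc a (k + (J + 1) * m) = a (k + J * m + m) := by ring_nf
        _ ≤ θ * (θ ^ J * B + ε / 2) + (1 - θ) * (ε / 2) := by nlinarith
        _ = θ ^ (J + 1) * B + ε / 2 := by ring
  obtain ⟨J, hJ⟩ : ∃ J, θ ^ J * B < ε / 2 :=
    (((tendsto_pow_atTop_nhds_zero_of_lt_one hθ₀ hθ).mul_const B).eventually
      (gt_mem_nhds (by simpa using half_pos hε))).exists
  refine ⟨K + J * m, fun k hk => ?_⟩
  obtain ⟨k, rfl⟩ : ∃ k', k = k' + J * m := ⟨k - J * m, by omega⟩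
  rw [Real.dist_eq, sub_zero, abs_of_nonneg (ha _)]
  linarith [hiter J k (by omega)]

theorem Finite.exists_pos_forall_le {α : Type*} [Finite α] {f : α → ℝ} (hf : ∀ a, 0 < f a) :
    ∃ c, 0 < c ∧ ∀ a, c ≤ f a := by
  cases isEmpty_or_nonempty α
  · exact ⟨1, one_pos, isEmptyElim⟩
  · obtain ⟨a₀, ha₀⟩ := Finite.exists_min f
    exact ⟨f a₀, hf a₀, ha₀⟩

theorem sum_abs_add_le {ι : Type*} [Fintype ι] (u v : ι → ℝ) :
    ∑ l, |(u + v) l| ≤ ∑ l, |u l| + ∑ l, |v l| := by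
  rw [← sum_add_distrib]
  exact sum_le_sum fun l _ => abs_add_le _ _

namespace Matrix

section Stochastic

variable {ι : Type*} [Fintype ι] [DecidableEq ι]

theorem sum_abs_vecMul_le {A : Matrix ι ι ℝ} (hA : A ∈ rowStochastic ℝ ι) (v : ι → ℝ) :
    ∑ l, |(v ᵥ* A) l| ≤ ∑ i, |v i| := by
  calc ∑ l, |(v ᵥ* A) l| ≤ ∑ l, ∑ i, |v i| * A i l := by
        refine sum_le_sum fun l _ => (abs_sum_le_sum_abs _ _).trans_eq ?_
        simp only [abs_mul, abs_of_nonneg (nonneg_of_mem_rowStochastic hA)]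
    _ = ∑ i, |v i| := by
        rw [sum_comm]
        simp only [← mul_sum, sum_row_of_mem_rowStochastic hA, mul_one]

/-- Dobrushin's contraction estimate. -/
theorem sum_abs_vecMul_le_of_forall_le {A : Matrix ι ι ℝ} (hA : A ∈ rowStochastic ℝ ι) {δ : ℝ}
    (hδ : ∀ i l, δ ≤ A i l) {v : ι → ℝ} (hv : ∑ i, v i = 0) :
    ∑ l, |(v ᵥ* A) l| ≤ (1 - Fintype.card ι * δ) * ∑ i, |v i| := by
  have hshift : ∀ l, (v ᵥ* A) l = ∑ i, v i * (A i l - δ) := fun l => by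
    simp [vecMul, dotProduct, mul_sub, sum_sub_distrib, ← sum_mul, hv]
  calc ∑ l, |(v ᵥ* A) l| ≤ ∑ l, ∑ i, |v i| * (A i l - δ) := by
        refine sum_le_sum fun l _ => (hshift l).symm ▸ (abs_sum_le_sum_abs _ _).trans_eq ?_
        simp only [abs_mul, abs_of_nonneg (sub_nonneg.2 (hδ _ l))]
    _ = (1 - Fintype.card ι * δ) * ∑ i, |v i| := by
        rw [sum_comm, mul_sum]
        refine sum_congr rfl fun i _ => ?_
        rw [← mul_sum, sum_sub_distrib, sum_row_of_mem_rowStochastic hA, sum_const, card_univ,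
          nsmul_eq_mul, mul_comm]

theorem sum_abs_vecMul_list_prod_sub_le {Θ : ι → ℝ} (A : ℕ → Matrix ι ι ℝ)
    (hA : ∀ t, A t ∈ rowStochastic ℝ ι) (j : ℕ) :
    ∑ l, |(Θ ᵥ* ((List.range j).map A).prod - Θ) l| ≤
      ∑ t ∈ range j, ∑ l, |(Θ ᵥ* A t - Θ) l| := by
  induction j with
  | zero => simp
  | succ j ih =>
    set R := ((List.range j).map A).prod
    have hR : R ∈ rowStochastic ℝ ι := Submonoid.list_prod_mem _ (by simp [hA])
    have hsplit : Θ ᵥ* (R * A j) - Θ = (Θ ᵥ* R - Θ) ᵥ* A j + (Θ ᵥ* A j - Θ) := by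
      rw [sub_vecMul, vecMul_vecMul]; abel
    rw [List.range_succ, List.map_append, List.prod_append, List.map_singleton,
      List.prod_singleton, hsplit, sum_range_succ]
    exact (sum_abs_add_le _ _).trans (add_le_add_left ((sum_abs_vecMul_le (hA j) _).trans ih) _)

theorem list_prod_map_range_add (A : ℕ → Matrix ι ι ℝ) (k m : ℕ) :
    ((List.range (k + m)).map A).prod =
      ((List.range k).map A).prod * ((List.range m).map fun t => A (k + t)).prod := by
  rw [List.range_add, List.map_append, List.prod_append, List.map_map]
  rfl

theorem tendsto_vecMul_list_prod_of_forall_le {M : ℕ → Matrix ι ι ℝ}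
    (hM : ∀ k, M k ∈ rowStochastic ℝ ι) {Θ : ι → ℝ} (hΘ : Θ ∈ stdSimplex ℝ ι) {m : ℕ} {δ : ℝ}
    (hδ : 0 < δ) (hwindow : ∀ᶠ k in atTop, ∀ i l,
      δ ≤ ((List.range m).map fun t => M (k + t)).prod i l)
    (hdefect : Tendsto (fun k => ∑ l, |(Θ ᵥ* M k - Θ) l|) atTop (𝓝 0))
    {x : ι → ℝ} (hx : x ∈ stdSimplex ℝ ι) :
    Tendsto (fun k => x ᵥ* ((List.range k).map M).prod) atTop (𝓝 Θ) := by
  cases isEmpty_or_nonempty ι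
  · exact tendsto_const_nhds.congr fun _ => Subsingleton.elim _ _
  set y := fun k => x ᵥ* ((List.range k).map M).prod
  set a := fun k => ∑ l, |(y k - Θ) l|
  have hy : ∀ k, y k ∈ stdSimplex ℝ ι := fun k => by
    have hQ : ((List.range k).map M).prod ∈ rowStochastic ℝ ι :=
      Submonoid.list_prod_mem _ (by simp [hM])
    refine ⟨nonneg_vecMul_of_mem_rowStochastic hQ hx.1, ?_⟩
    simpa [dotProduct_one] using
      vecMul_dotProduct_one_eq_one_rowStochastic hQ (by simpa [dotProduct_one] using hx.2)
  have ha : ∀ k, 0 ≤ a k := fun k => sum_nonneg fun l _ => abs_nonneg _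
  have ha₂ : ∀ k, a k ≤ 2 := fun k => by
    calc a k ≤ ∑ l, (y k l + Θ l) := sum_le_sum fun l _ => by
          simp only [Pi.sub_apply, abs_le]
          constructor <;> linarith [(hy k).1 l, hΘ.1 l]
      _ = 2 := by rw [sum_add_distrib, (hy k).2, hΘ.2]; norm_num
  have hrec : ∀ᶠ k in atTop, a (k + m) ≤ (1 - Fintype.card ι * δ) * a k +
      ∑ t ∈ range m, ∑ l, |(Θ ᵥ* M (k + t) - Θ) l| := by
    filter_upwards [hwindow] with k hk
    set W := ((List.range m).map fun t => M (k + t)).prod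
    have hW : W ∈ rowStochastic ℝ ι := Submonoid.list_prod_mem _ (by simp [hM])
    have hsplit : y (k + m) - Θ = (y k - Θ) ᵥ* W + (Θ ᵥ* W - Θ) := by
      simp only [y, list_prod_map_range_add, ← vecMul_vecMul, sub_vecMul]; abel
    have hsum : ∑ l, (y k - Θ) l = 0 := by simp [sum_sub_distrib, (hy k).2, hΘ.2]
    calc a (k + m) ≤ ∑ l, |((y k - Θ) ᵥ* W) l| + ∑ l, |(Θ ᵥ* W - Θ) l| := by
          simp only [a]; rw [hsplit]; exact sum_abs_add_le _ _
      _ ≤ _ := add_le_add (sum_abs_vecMul_le_of_forall_le hW hk hsum)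
          (sum_abs_vecMul_list_prod_sub_le _ (fun t => hM (k + t)) m)
  have hc : Tendsto (fun k => ∑ t ∈ range m, ∑ l, |(Θ ᵥ* M (k + t) - Θ) l|) atTop (𝓝 0) := by
    simpa using tendsto_finsetSum (range m) fun t _ => hdefect.comp (tendsto_add_atTop_nat t)
  have hθ : 1 - Fintype.card ι * δ < 1 :=
    sub_lt_self _ (mul_pos (Nat.cast_pos.2 Fintype.card_pos) hδ)
  refine tendsto_pi_nhds.2 fun i => tendsto_iff_dist_tendsto_zero.2 <|
    squeeze_zero (fun _ => dist_nonneg) (fun k => ?_) (tendsto_zero_of_le_mul_add hθ ha ha₂ hc hrec)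
  rw [Real.dist_eq]
  exact single_le_sum (f := fun l => |(y k - Θ) l|) (fun l _ => abs_nonneg _) (mem_univ i)

end Stochastic

section Primitive

variable {ι R : Type*} [Fintype ι] [DecidableEq ι] [Ring R] [LinearOrder R] [IsStrictOrderedRing R]
  {A : Matrix ι ι R}

theorem pow_apply_pos_of_le (hA : ∀ i j, 0 ≤ A i j) (hdiag : ∀ i, 0 < A i i) {a b : ℕ}
    (hab : a ≤ b) {i j : ι} (h : 0 < (A ^ a) i j) : 0 < (A ^ b) i j := by
  induction b, hab using Nat.le_induction with
  | base => exact h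
  | succ b _ ih =>
    rw [pow_succ, mul_apply]
    exact (mul_pos ih (hdiag j)).trans_le <| single_le_sum
      (fun l _ => mul_nonneg (pow_apply_nonneg hA b i l) (hA l j)) (mem_univ j)

theorem IsIrreducible.isPrimitive_of_diag_pos (hA : A.IsIrreducible) (hdiag : ∀ i, 0 < A i i) :
    A.IsPrimitive := by
  choose k _ hk using (isIrreducible_iff_exists_pow_pos hA.nonneg).1 hA
  obtain ⟨K, hK⟩ := Finite.exists_le fun p : ι × ι => k p.1 p.2
  exact ⟨hA.nonneg, K + 1, K.succ_pos, fun i j =>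
    pow_apply_pos_of_le hA.nonneg hdiag ((hK (i, j)).trans K.le_succ) (hk i j)⟩

end Primitive

theorem pow_mul_pow_apply_le_list_prod_apply {ι R : Type*} [Fintype ι] [DecidableEq ι]
    [CommRing R] [LinearOrder R] [IsStrictOrderedRing R] {C : Matrix ι ι R}
    (hC : ∀ i j, 0 ≤ C i j) {γ : R} (hγ : 0 ≤ γ) {L : List (Matrix ι ι R)}
    (hL : ∀ A ∈ L, ∀ i j, γ * C i j ≤ A i j) (i j : ι) :
    γ ^ L.length * (C ^ L.length) i j ≤ L.prod i j := by
  induction L generalizing i j with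
  | nil => simp
  | cons A L ih =>
    have hA := hL A List.mem_cons_self
    calc γ ^ (L.length + 1) * (C ^ (L.length + 1)) i j
        = ∑ l, γ * C i l * (γ ^ L.length * (C ^ L.length) l j) := by
          rw [pow_succ' C, mul_apply, pow_succ', mul_sum]
          exact sum_congr rfl fun l _ => by ring
      _ ≤ ∑ l, A i l * L.prod l j := sum_le_sum fun l _ =>
          mul_le_mul (hA i l) (ih (fun B hB => hL B (List.mem_cons_of_mem _ hB)) l j)
            (mul_nonneg (pow_nonneg hγ _) (pow_apply_nonneg hC _ l j))
            ((mul_nonneg hγ (hC i l)).trans (hA i l))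
      _ = (A :: L).prod i j := by rw [List.prod_cons, mul_apply]

theorem eventually_forall_le_list_prod_of_isPrimitive {ι : Type*} [Fintype ι] [DecidableEq ι]
    {C : Matrix ι ι ℝ} (hC : C.IsPrimitive) {γ : ℝ} (hγ : 0 < γ) {M : ℕ → Matrix ι ι ℝ}
    (hMC : ∀ᶠ k in atTop, ∀ i j, γ * C i j ≤ M k i j) :
    ∃ m δ, 0 < δ ∧ ∀ᶠ k in atTop, ∀ i j,
      δ ≤ ((List.range m).map fun t => M (k + t)).prod i j := by
  obtain ⟨m, -, hm⟩ := hC.exists_pos_pow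
  obtain ⟨c, hc, hcC⟩ :=
    Finite.exists_pos_forall_le (f := fun p : ι × ι => (C ^ m) p.1 p.2) fun p => hm p.1 p.2
  obtain ⟨K, hK⟩ := eventually_atTop.1 hMC
  refine ⟨m, γ ^ m * c, by positivity, eventually_atTop.2 ⟨K, fun k hk i j => ?_⟩⟩
  have hprod := pow_mul_pow_apply_le_list_prod_apply hC.nonneg hγ.le
    (L := (List.range m).map fun t => M (k + t))
    (by simp only [List.mem_map, List.mem_range]; rintro _ ⟨t, -, rfl⟩; exact hK _ (by omega)) i j
  simp only [List.length_map, List.length_range] at hprod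
  exact (mul_le_mul_of_nonneg_left (hcC (i, j)) (by positivity)).trans hprod

section RowMix

variable {ι : Type*} [Fintype ι] [DecidableEq ι]

def rowMix (w : ι → ℝ) (P S : Matrix ι ι ℝ) : Matrix ι ι ℝ :=
  (1 - diagonal w) * P + diagonal w * S

variable {w : ι → ℝ} {P S : Matrix ι ι ℝ}

theorem rowMix_apply (i l : ι) : rowMix w P S i l = (1 - w i) * P i l + w i * S i l := by
  simp [rowMix, sub_mul, diagonal_mul]

theorem rowMix_mem_rowStochastic (hw₀ : ∀ i, 0 ≤ w i) (hw₁ : ∀ i, w i ≤ 1)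
    (hP : P ∈ rowStochastic ℝ ι) (hS : S ∈ rowStochastic ℝ ι) :
    rowMix w P S ∈ rowStochastic ℝ ι := by
  refine mem_rowStochastic_iff_sum.2 ⟨fun i l => ?_, fun i => ?_⟩
  · rw [rowMix_apply]
    exact add_nonneg (mul_nonneg (sub_nonneg.2 (hw₁ i)) (nonneg_of_mem_rowStochastic hP))
      (mul_nonneg (hw₀ i) (nonneg_of_mem_rowStochastic hS))
  · simp only [rowMix_apply, sum_add_distrib, ← mul_sum, sum_row_of_mem_rowStochastic hP,
      sum_row_of_mem_rowStochastic hS]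
    ring

theorem rowMix_apply_pos {i l : ι} (hw₀ : 0 ≤ w i) (hw₁ : w i < 1) (hP : 0 < P i l)
    (hS : 0 ≤ S i l) : 0 < rowMix w P S i l := by
  rw [rowMix_apply]
  exact add_pos_of_pos_of_nonneg (mul_pos (sub_pos.2 hw₁) hP) (mul_nonneg hw₀ hS)

theorem sum_abs_vecMul_rowMix_sub_le (hP : P ∈ rowStochastic ℝ ι) (hS : S ∈ rowStochastic ℝ ι)
    {Θ : ι → ℝ} (hΘ : Θ ∈ stdSimplex ℝ ι) (hΘP : Θ ᵥ* P = Θ) {ε : ℝ} (hw : ∀ i, |w i| ≤ ε) :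
    ∑ l, |(Θ ᵥ* rowMix w P S - Θ) l| ≤ 2 * ε := by
  set u := Θ ᵥ* diagonal w
  have hdefect : Θ ᵥ* rowMix w P S - Θ = u ᵥ* S - u ᵥ* P := by
    rw [show rowMix w P S = P + diagonal w * (S - P) by
        simp only [rowMix, sub_mul, mul_sub, one_mul]; abel,
      vecMul_add, hΘP, ← vecMul_vecMul, vecMul_sub]
    abel
  have hu : ∑ i, |u i| ≤ ε := calc
    ∑ i, |u i| ≤ ∑ i, Θ i * ε := sum_le_sum fun i _ => by
        rw [show u i = Θ i * w i from vecMul_diagonal _ _ _, abs_mul, abs_of_nonneg (hΘ.1 i)]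
        exact mul_le_mul_of_nonneg_left (hw i) (hΘ.1 i)
    _ = ε := by rw [← sum_mul, hΘ.2, one_mul]
  calc ∑ l, |(Θ ᵥ* rowMix w P S - Θ) l| ≤ ∑ l, |(u ᵥ* S) l| + ∑ l, |(u ᵥ* P) l| := by
        rw [hdefect, ← sum_add_distrib]
        exact sum_le_sum fun l _ => abs_sub _ _
    _ ≤ 2 * ε := by linarith [sum_abs_vecMul_le hS u, sum_abs_vecMul_le hP u]

theorem tendsto_vecMul_list_prod_rowMix {C : Matrix ι ι ℝ} (hC01 : ∀ i l, C i l = 0 ∨ C i l = 1)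
    (hC : C.IsPrimitive) {P S : ℕ → Matrix ι ι ℝ} (hP : ∀ k, P k ∈ rowStochastic ℝ ι)
    (hS : ∀ k, S k ∈ rowStochastic ℝ ι) (hPC : ∀ k i l, C i l = 1 → 0 < P k i l)
    {Θ : ι → ℝ} (hΘ : Θ ∈ stdSimplex ℝ ι) (hΘP : ∀ k, Θ ᵥ* P k = Θ)
    {w : ℕ → ι → ℝ} {ε : ℕ → ℝ} (hw₀ : ∀ k i, 0 ≤ w k i) (hw₁ : ∀ k i, w k i ≤ 1)
    (hwε : ∀ k i, w k i ≤ ε k) (hε : Tendsto ε atTop (𝓝 0)) {γ : ℝ} (hγ : 0 < γ)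
    (hγM : ∀ k i l, 0 < rowMix (w k) (P k) (S k) i l → γ ≤ rowMix (w k) (P k) (S k) i l)
    {x : ι → ℝ} (hx : x ∈ stdSimplex ℝ ι) :
    Tendsto (fun k => x ᵥ* ((List.range k).map fun t => rowMix (w t) (P t) (S t)).prod)
      atTop (𝓝 Θ) := by
  have hM : ∀ k, rowMix (w k) (P k) (S k) ∈ rowStochastic ℝ ι := fun k =>
    rowMix_mem_rowStochastic (hw₀ k) (hw₁ k) (hP k) (hS k)
  have hMC : ∀ᶠ k in atTop, ∀ i l, γ * C i l ≤ rowMix (w k) (P k) (S k) i l := by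
    filter_upwards [hε.eventually (gt_mem_nhds zero_lt_one)] with k hk i l
    rcases hC01 i l with h | h
    · simpa [h] using nonneg_of_mem_rowStochastic (hM k)
    · rw [h, mul_one]
      exact hγM k i l <| rowMix_apply_pos (hw₀ k i) ((hwε k i).trans_lt hk) (hPC k i l h)
        (nonneg_of_mem_rowStochastic (hS k))
  have hdefect :
      Tendsto (fun k => ∑ l, |(Θ ᵥ* rowMix (w k) (P k) (S k) - Θ) l|) atTop (𝓝 0) :=
    squeeze_zero (fun _ => sum_nonneg fun _ _ => abs_nonneg _)
      (fun k => sum_abs_vecMul_rowMix_sub_le (hP k) (hS k) hΘ (hΘP k)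
        fun i => (abs_of_nonneg (hw₀ k i)).trans_le (hwε k i))
      (by simpa using hε.const_mul 2)
  obtain ⟨m, δ, hδ, hwindow⟩ := eventually_forall_le_list_prod_of_isPrimitive hC hγ hMC
  exact tendsto_vecMul_list_prod_of_forall_le hM hΘ hδ hwindow hdefect hx

end RowMix

end Matrix

open Matrix

theorem swarm_distribution_convergence_general
    (n : ℕ)
    (Θ : Fin n → ℝ) (hΘpos : ∀ i, 0 < Θ i) (hΘsum : ∑ i, Θ i = 1)
    (C : Matrix (Fin n) (Fin n) ℝ)
    (hC01 : ∀ i l, C i l = 0 ∨ C i l = 1)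
    (hCdiag : ∀ i, C i i = 1)
    (hCirr : ∀ i l, ∃ m : ℕ, 0 < m ∧ 0 < (C ^ m) i l)
    (k₀ : ℕ) (τ : ℝ) (hτ : 0 < τ)
    (P S : ℕ → Matrix (Fin n) (Fin n) ℝ)
    (hPnn : ∀ k, k₀ ≤ k → ∀ i l, 0 ≤ P k i l)
    (hProw : ∀ k, k₀ ≤ k → ∀ i, ∑ l, P k i l = 1)
    (hSnn : ∀ k, k₀ ≤ k → ∀ i l, 0 ≤ S k i l)
    (hSrow : ∀ k, k₀ ≤ k → ∀ i, ∑ l, S k i l = 1)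
    (G : ℕ → Fin n → ℝ)
    (hG : ∀ k i, 0 ≤ G k i ∧ G k i ≤ 1)
    (ω : ℕ → Fin n → ℝ)
    (hω : ∀ k i, ω k i = Real.exp (-(τ * (k : ℝ))) * G k i)
    (M : ℕ → Matrix (Fin n) (Fin n) ℝ)
    (hM : ∀ k, k₀ ≤ k →
      M k = (1 - Matrix.diagonal (ω k)) * P k + Matrix.diagonal (ω k) * S k)
    -- (ii) `Θ` is stationary for every `P k`
    (hPstat : ∀ k, k₀ ≤ k → Θ ᵥ* P k = Θ)
    -- (iii) the sparsity pattern of `P k` is exactly `C`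
    (hPCpos : ∀ k, k₀ ≤ k → ∀ i l, C i l = 1 → 0 < P k i l)
    -- (iv) uniform positive lower bound on positive entries of `M k`
    (γ : ℝ) (hγ : 0 < γ)
    (hγlb : ∀ k, k₀ ≤ k → ∀ i l, 0 < M k i l → γ ≤ M k i l)
    (x : Fin n → ℝ) (hxnn : ∀ i, 0 ≤ x i) (hxsum : ∑ i, x i = 1) :
    ∀ i, Filter.Tendsto
      (fun k : ℕ =>
        (x ᵥ* ((List.range (k - k₀)).map (fun t => M (k₀ + t))).prod) i)
      Filter.atTop (nhds (Θ i)) := by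
  have hM' : ∀ t, M (k₀ + t) = rowMix (ω (k₀ + t)) (P (k₀ + t)) (S (k₀ + t)) :=
    fun t => hM _ le_self_add
  have hω_le : ∀ k i, ω k i ≤ Real.exp (-(τ * k)) := fun k i =>
    hω k i ▸ mul_le_of_le_one_right (Real.exp_nonneg _) (hG k i).2
  have hω₀ : ∀ k i, 0 ≤ ω k i := fun k i => hω k i ▸ mul_nonneg (Real.exp_nonneg _) (hG k i).1
  have hω₁ : ∀ k i, ω k i ≤ 1 := fun k i =>
    (hω_le k i).trans (Real.exp_le_one_iff.2 (neg_nonpos.2 (by positivity)))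
  have hε : Tendsto (fun k : ℕ => Real.exp (-(τ * ↑(k₀ + k)))) atTop (𝓝 0) :=
    Real.tendsto_exp_neg_atTop_nhds_zero.comp <| Tendsto.const_mul_atTop hτ <|
      tendsto_natCast_atTop_atTop.comp (tendsto_atTop_mono (fun k => le_add_self) tendsto_id)
  have hC : C.IsPrimitive := ((isIrreducible_iff_exists_pow_pos fun i l => by
      rcases hC01 i l with h | h <;> simp [h]).2 hCirr).isPrimitive_of_diag_pos (by simp [hCdiag])
  simp only [hM']
  exact tendsto_pi_nhds.1 <| (tendsto_vecMul_list_prod_rowMix hC01 hC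
    (fun k => mem_rowStochastic_iff_sum.2 ⟨hPnn _ le_self_add, hProw _ le_self_add⟩)
    (fun k => mem_rowStochastic_iff_sum.2 ⟨hSnn _ le_self_add, hSrow _ le_self_add⟩)
    (fun k => hPCpos _ le_self_add) ⟨fun i => (hΘpos i).le, hΘsum⟩
    (fun k => hPstat _ le_self_add) (fun k => hω₀ _) (fun k => hω₁ _) (fun k => hω_le _) hε hγ
    (fun k => hM' k ▸ hγlb _ le_self_add) ⟨hxnn, hxsum⟩).comp (tendsto_sub_atTop_nat k₀)

/-- Under requirements (R2)-(R4) on the primary guidance matrices `P k`,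
with `M k = (I - W k) * P k + W k * S k` where the diagonal weights are
`ω k i = exp (-(τ k)) * G k i`, and with a uniform positive lower bound `γ` on all
positive entries of the `M k`, every row-stochastic initial vector `x` satisfies
`x ᵥ* M k₀ * M (k₀+1) * ⋯ * M (k-1) → Θ` entrywise as `k → ∞`. -/
theorem swarm_distribution_convergence
    (n : ℕ) (hn : 1 ≤ n)
    (Θ : Fin n → ℝ) (hΘpos : ∀ i, 0 < Θ i) (hΘsum : ∑ i, Θ i = 1)
    (C : Matrix (Fin n) (Fin n) ℝ)
    (hCsymm : ∀ i l, C i l = C l i)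
    (hC01 : ∀ i l, C i l = 0 ∨ C i l = 1)
    (hCdiag : ∀ i, C i i = 1)
    (hCirr : ∀ i l, ∃ m : ℕ, 0 < m ∧ 0 < (C ^ m) i l)
    (k₀ : ℕ) (τ : ℝ) (hτ : 0 < τ)
    (P S : ℕ → Matrix (Fin n) (Fin n) ℝ)
    (hPnn : ∀ k, k₀ ≤ k → ∀ i l, 0 ≤ P k i l)
    (hProw : ∀ k, k₀ ≤ k → ∀ i, ∑ l, P k i l = 1)
    (hSnn : ∀ k, k₀ ≤ k → ∀ i l, 0 ≤ S k i l)
    (hSrow : ∀ k, k₀ ≤ k → ∀ i, ∑ l, S k i l = 1)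
    (G : ℕ → Fin n → ℝ)
    (hG : ∀ k i, 0 ≤ G k i ∧ G k i ≤ 1)
    (ω : ℕ → Fin n → ℝ)
    (hω : ∀ k i, ω k i = Real.exp (-(τ * (k : ℝ))) * G k i)
    (M : ℕ → Matrix (Fin n) (Fin n) ℝ)
    (hM : ∀ k, k₀ ≤ k →
      M k = (1 - Matrix.diagonal (ω k)) * P k + Matrix.diagonal (ω k) * S k)
    -- (i) positive diagonal entries of `P k`
    (hPdiag : ∀ k, k₀ ≤ k → ∀ i, 0 < P k i i)
    -- (ii) `Θ` is stationary for every `P k`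
    (hPstat : ∀ k, k₀ ≤ k → Θ ᵥ* P k = Θ)
    -- (iii) the sparsity pattern of `P k` is exactly `C`
    (hPCpos : ∀ k, k₀ ≤ k → ∀ i l, C i l = 1 → 0 < P k i l)
    (hPCzero : ∀ k, k₀ ≤ k → ∀ i l, C i l = 0 → P k i l = 0)
    -- (iv) uniform positive lower bound on positive entries of `M k`
    (γ : ℝ) (hγ : 0 < γ)
    (hγlb : ∀ k, k₀ ≤ k → ∀ i l, 0 < M k i l → γ ≤ M k i l)
    (x : Fin n → ℝ) (hxnn : ∀ i, 0 ≤ x i) (hxsum : ∑ i, x i = 1) :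
    ∀ i, Filter.Tendsto
      (fun k : ℕ =>
        (x ᵥ* ((List.range (k - k₀)).map (fun t => M (k₀ + t))).prod) i)
      Filter.atTop (nhds (Θ i)) :=
  swarm_distribution_convergence_general n Θ hΘpos hΘsum C hC01 hCdiag hCirr k₀ τ hτ P S hPnn hProw
    hSnn hSrow G hG ω hω M hM hPstat hPCpos γ hγ hγlb x hxnn hxsum
end

section
/- Let G be a connected simple graph on n vertices and let Θ ∈ ℝⁿ have all entries positive. Then the rank of B(G,Θ) equals n − 1. -/
open Matrix

/-- The matrix `B(G,Θ)`: `B i j = 1` if `{i,j}` is an edge, the diagonal entry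
`B i i = -(∑_{j adjacent to i} Θ j) / Θ i`, and `B i j = 0` otherwise. -/
noncomputable def Bmat {n : ℕ} (G : SimpleGraph (Fin n)) [DecidableRel G.Adj] (Θ : Fin n → ℝ) :
    Matrix (Fin n) (Fin n) ℝ :=
  Matrix.of fun i j =>
    if G.Adj i j then 1
    else if i = j then -(∑ l, if G.Adj i l then Θ l else 0) / Θ i
    else 0

lemma Bmat_mulVec {n : ℕ} (G : SimpleGraph (Fin n)) [DecidableRel G.Adj] (Θ : Fin n → ℝ)
    (x : Fin n → ℝ) (i : Fin n) :
    (Bmat G Θ *ᵥ x) i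
      = (∑ j, if G.Adj i j then x j else 0)
        - (∑ l, if G.Adj i l then Θ l else 0) / Θ i * x i := by
  have : ∀ j, Bmat G Θ i j * x j
      = (if G.Adj i j then x j else 0)
        + (if i = j then -(∑ l, if G.Adj i l then Θ l else 0) / Θ i * x j else 0) := by
    intro j
    by_cases h : G.Adj i j
    · have hne : i ≠ j := G.ne_of_adj h
      simp [Bmat, h, hne]
    · by_cases h2 : i = j <;> simp [Bmat, h, h2]
  simp only [Matrix.mulVec, dotProduct, this, Finset.sum_add_distrib]
  rw [Finset.sum_ite_eq (Finset.univ) i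
      (fun j => -(∑ l, if G.Adj i l then Θ l else 0) / Θ i * x j)]
  simp
  ring

lemma Bmat_mulVec_theta {n : ℕ} (G : SimpleGraph (Fin n)) [DecidableRel G.Adj] (Θ : Fin n → ℝ)
    (hΘ : ∀ i, 0 < Θ i) : Bmat G Θ *ᵥ Θ = 0 := by
  funext i
  rw [Bmat_mulVec]
  have : (∑ l, if G.Adj i l then Θ l else 0) / Θ i * Θ i
      = ∑ l, if G.Adj i l then Θ l else 0 :=
    div_mul_cancel₀ _ (hΘ i).ne'
  simp [this]

lemma Bmat_ker {n : ℕ} (G : SimpleGraph (Fin n)) [DecidableRel G.Adj] (hconn : G.Connected)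
    (Θ : Fin n → ℝ) (hΘ : ∀ i, 0 < Θ i) (x : Fin n → ℝ) (hx : Bmat G Θ *ᵥ x = 0) :
    ∃ c : ℝ, x = c • Θ := by
  haveI : Nonempty (Fin n) := hconn.nonempty
  set y : Fin n → ℝ := fun i => x i / Θ i with hy
  have hxy : ∀ i, x i = Θ i * y i := by
    intro i
    rw [hy, eq_comm, mul_comm]
    exact div_mul_cancel₀ (x i) (hΘ i).ne'
  obtain ⟨i₀, hi₀⟩ := Finite.exists_max y
  -- step: neighbors of a maximizer are maximizers
  have step : ∀ i, y i = y i₀ → ∀ j, G.Adj i j → y j = y i₀ := by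
    intro i hi j hij
    have hrow : (Bmat G Θ *ᵥ x) i = 0 := by rw [hx]; rfl
    rw [Bmat_mulVec] at hrow
    have hsum : ∑ l, (if G.Adj i l then Θ l * (y i₀ - y l) else 0) = 0 := by
      have h1 : (∑ l, if G.Adj i l then x l else 0)
          = ∑ l, if G.Adj i l then Θ l * y l else 0 := by
        refine Finset.sum_congr rfl fun l _ => ?_
        by_cases h : G.Adj i l <;> simp [h, hxy l]
      have h2 : (∑ l, if G.Adj i l then Θ l else 0) / Θ i * x i
          = (∑ l, if G.Adj i l then Θ l else 0) * y i := by
        rw [hxy i, ← mul_assoc, div_mul_cancel₀ _ (hΘ i).ne']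
      rw [h1, h2] at hrow
      have h3 : ∑ l, (if G.Adj i l then Θ l * (y i₀ - y l) else 0)
          = (∑ l, if G.Adj i l then Θ l * y i₀ else 0)
            - ∑ l, if G.Adj i l then Θ l * y l else 0 := by
        rw [← Finset.sum_sub_distrib]
        refine Finset.sum_congr rfl fun l _ => ?_
        by_cases h : G.Adj i l <;> simp [h] <;> try ring
      have h4 : (∑ l, if G.Adj i l then Θ l * y i₀ else 0)
          = (∑ l, if G.Adj i l then Θ l else 0) * y i₀ := by
        rw [Finset.sum_mul]
        refine Finset.sum_congr rfl fun l _ => ?_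
        by_cases h : G.Adj i l <;> simp [h]
      rw [h3, h4, ← hi]
      linarith [hrow]
    have hnonneg : ∀ l ∈ Finset.univ,
        0 ≤ (if G.Adj i l then Θ l * (y i₀ - y l) else 0) := by
      intro l _
      by_cases h : G.Adj i l
      · simp only [h, if_true]
        exact mul_nonneg (hΘ l).le (by linarith [hi₀ l])
      · simp [h]
    have := (Finset.sum_eq_zero_iff_of_nonneg hnonneg).mp hsum j (Finset.mem_univ j)
    rw [if_pos hij] at this
    rcases mul_eq_zero.mp this with h | h
    · exact absurd h (hΘ j).ne'
    · linarith
  -- connectivity: all vertices are maximizers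
  have hall : ∀ k, y k = y i₀ := by
    intro k
    obtain ⟨w⟩ := (hconn i₀ k)
    have : ∀ (u v : Fin n) (_ : G.Walk u v), y u = y i₀ → y v = y i₀ := by
      intro u v p
      induction p with
      | nil => exact fun h => h
      | cons h p ih => exact fun hu => ih (step _ hu _ h)
    exact this i₀ k w rfl
  refine ⟨y i₀, funext fun i => ?_⟩
  rw [hxy i, hall i]
  simp [mul_comm]

/-- If `G` is a connected simple graph on `n` vertices and `Θ` has
positive entries, then `rank B(G,Θ) = n - 1`. -/
theorem connected_B_rank
    (n : ℕ) (G : SimpleGraph (Fin n)) [DecidableRel G.Adj] (hconn : G.Connected)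
    (Θ : Fin n → ℝ) (hΘ : ∀ i, 0 < Θ i) :
    (Bmat G Θ).rank = n - 1 := by
  haveI : Nonempty (Fin n) := hconn.nonempty
  have hn : 1 ≤ n := Fin.pos_iff_nonempty.mpr ‹_›
  have hΘne : Θ ≠ 0 := by
    intro h
    obtain ⟨i⟩ := ‹Nonempty (Fin n)›
    have := hΘ i
    rw [h] at this
    simp at this
  have hker : LinearMap.ker (Bmat G Θ).mulVecLin = Submodule.span ℝ {Θ} := by
    apply le_antisymm
    · intro x hx
      obtain ⟨c, hc⟩ := Bmat_ker G hconn Θ hΘ x (by simpa using hx)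
      rw [hc]
      exact Submodule.smul_mem _ c (Submodule.mem_span_singleton_self Θ)
    · rw [Submodule.span_singleton_le_iff_mem]
      show (Bmat G Θ).mulVecLin Θ = 0
      simpa using Bmat_mulVec_theta G Θ hΘ
  have hkdim : Module.finrank ℝ (LinearMap.ker (Bmat G Θ).mulVecLin) = 1 := by
    rw [hker, finrank_span_singleton hΘne]
  have hrn := LinearMap.finrank_range_add_finrank_ker (Bmat G Θ).mulVecLin
  rw [hkdim] at hrn
  have hdom : Module.finrank ℝ (Fin n → ℝ) = n := by
    simp [Module.finrank_fintype_fun_eq_card]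
  rw [hdom] at hrn
  rw [Matrix.rank]
  omega
end

section
/- Let G be a connected simple graph on n vertices and let Θ ∈ ℝⁿ be a row-stochastic vector with all entries positive. Then a row vector v ∈ ℝⁿ satisfies v · B(G,Θ) = 0 if and only if v = ε·Θ for some scalar ε ∈ ℝ. Consequently, if n_k ∈ ℝⁿ is a nonnegative vector with Σᵢ n_k[i] = N > 0 and n_k · B(G,Θ) = 0, then n_k[i]/N = Θ[i] for every i; that is, the swarm distribution equals the desired distribution Θ exactly when the local balance conditions n_k·B = 0 hold. -/
open Matrix

lemma Bmat_entry {n : ℕ} (G : SimpleGraph (Fin n)) [DecidableRel G.Adj] (Θ : Fin n → ℝ)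
    (v : Fin n → ℝ) (j : Fin n) :
    (v ᵥ* Bmat G Θ) j =
      (∑ i, if G.Adj j i then v i else 0)
        - v j * (∑ l, if G.Adj j l then Θ l else 0) / Θ j := by
  have h0 : (v ᵥ* Bmat G Θ) j = ∑ i, v i * Bmat G Θ i j := rfl
  rw [h0]
  have hsplit : ∀ i, v i * Bmat G Θ i j =
      (if G.Adj j i then v i else 0) +
      (if i = j then -(v j * (∑ l, if G.Adj j l then Θ l else 0) / Θ j) else 0) := by
    intro i
    by_cases hij : G.Adj i j
    · have hji : G.Adj j i := hij.symm
      have hne : i ≠ j := hij.ne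
      simp [Bmat, hij, hji, hne]
    · have hji : ¬ G.Adj j i := fun h => hij h.symm
      by_cases he : i = j
      · subst he
        simp only [Bmat, Matrix.of_apply, hij, if_false, if_pos rfl, if_true]
        ring
      · simp [Bmat, hij, hji, he]
  rw [Finset.sum_congr rfl fun i _ => hsplit i, Finset.sum_add_distrib,
    Finset.sum_ite_eq' Finset.univ j]
  simp [sub_eq_add_neg]

/-- For a connected simple graph `G` and a row-stochastic positive vector
`Θ`, a row vector `v` satisfies `v · B(G,Θ) = 0` iff `v = ε • Θ` for some scalar `ε`.
Consequently, any nonnegative population vector `nk` summing to `N > 0` with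
`nk · B(G,Θ) = 0` satisfies `nk i / N = Θ i` for every `i`. -/
theorem B_left_kernel_characterization
    (n : ℕ) (G : SimpleGraph (Fin n)) [DecidableRel G.Adj] (hconn : G.Connected)
    (Θ : Fin n → ℝ) (hΘpos : ∀ i, 0 < Θ i) (hΘsum : ∑ i, Θ i = 1) :
    (∀ v : Fin n → ℝ, v ᵥ* Bmat G Θ = 0 ↔ ∃ ε : ℝ, v = ε • Θ) ∧
    (∀ (nk : Fin n → ℝ) (N : ℝ), (∀ i, 0 ≤ nk i) → ∑ i, nk i = N → 0 < N →
      nk ᵥ* Bmat G Θ = 0 → ∀ i, nk i / N = Θ i) := by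
  have hΘne : ∀ i, Θ i ≠ 0 := fun i => (hΘpos i).ne'
  have key : ∀ v : Fin n → ℝ, v ᵥ* Bmat G Θ = 0 ↔ ∃ ε : ℝ, v = ε • Θ := by
    intro v
    constructor
    · intro hv
      set w : Fin n → ℝ := fun i => v i / Θ i with hw
      have hvw : ∀ i, v i = Θ i * w i := by
        intro i
        show v i = Θ i * (v i / Θ i)
        rw [mul_comm]
        exact (div_mul_cancel₀ _ (hΘne i)).symm
      have hne : Nonempty (Fin n) := hconn.nonempty
      obtain ⟨i0, _, hi0⟩ := Finset.exists_max_image (Finset.univ : Finset (Fin n)) w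
        Finset.univ_nonempty
      have heq : ∀ j, ∑ i, (if G.Adj j i then Θ i * (w j - w i) else 0) = 0 := by
        intro j
        have hj := Bmat_entry G Θ v j
        have hj0 : (0 : ℝ) = (∑ i, if G.Adj j i then v i else 0)
            - v j * (∑ l, if G.Adj j l then Θ l else 0) / Θ j := by
          rw [← hj, hv]; rfl
        have hj' : v j * (∑ l, if G.Adj j l then Θ l else 0) / Θ j
            = (∑ i, if G.Adj j i then v i else 0) := by linarith
        have hSj : (∑ l, if G.Adj j l then Θ l else 0) * w j
            = (∑ i, if G.Adj j i then v i else 0) := by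
          have hj'' : v j * (∑ l, if G.Adj j l then Θ l else 0)
              = (∑ i, if G.Adj j i then v i else 0) * Θ j := (div_eq_iff (hΘne j)).mp hj'
          show (∑ l, if G.Adj j l then Θ l else 0) * (v j / Θ j)
              = (∑ i, if G.Adj j i then v i else 0)
          rw [← mul_div_assoc, div_eq_iff (hΘne j)]
          linear_combination hj''
        calc ∑ i, (if G.Adj j i then Θ i * (w j - w i) else 0)
            = ∑ i, ((if G.Adj j i then Θ i else 0) * w j - (if G.Adj j i then v i else 0)) := by
              apply Finset.sum_congr rfl; intro i _
              by_cases h : G.Adj j i <;> simp [h, hvw i] <;> ring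
          _ = (∑ i, if G.Adj j i then Θ i else 0) * w j - ∑ i, (if G.Adj j i then v i else 0) := by
              rw [Finset.sum_sub_distrib, Finset.sum_mul]
          _ = 0 := by rw [hSj]; ring
      have hstep : ∀ j k, w j = w i0 → G.Adj j k → w k = w i0 := by
        intro j k hj hadj
        have hnonneg : ∀ i ∈ Finset.univ, 0 ≤ (if G.Adj j i then Θ i * (w j - w i) else 0) := by
          intro i _
          by_cases h : G.Adj j i
          · rw [if_pos h]
            have h1 : w i ≤ w j := hj ▸ hi0 i (Finset.mem_univ i)
            have h2 : (0:ℝ) ≤ Θ i := (hΘpos i).le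
            nlinarith
          · rw [if_neg h]
        have hterms := (Finset.sum_eq_zero_iff_of_nonneg hnonneg).mp (heq j) k
          (Finset.mem_univ k)
        rw [if_pos hadj] at hterms
        have hzero : w j - w k = 0 := by
          rcases mul_eq_zero.mp hterms with h | h
          · exact absurd h (hΘne k)
          · exact h
        have : w k = w j := by linarith
        rw [this, hj]
      have hwalk : ∀ (a b : Fin n) (p : G.Walk a b), w a = w i0 → w b = w i0 := by
        intro a b p
        induction p with
        | nil => exact id
        | cons hadj _ ih => exact fun ha => ih (hstep _ _ ha hadj)
      refine ⟨w i0, funext fun i => ?_⟩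
      have hi : w i = w i0 := hwalk i0 i (hconn.preconnected i0 i).some rfl
      show v i = w i0 * Θ i
      rw [← hi]
      show v i = v i / Θ i * Θ i
      exact (div_mul_cancel₀ _ (hΘne i)).symm
    · rintro ⟨ε, rfl⟩
      funext j
      rw [Pi.zero_apply, Bmat_entry]
      have h1 : (∑ i, if G.Adj j i then (ε • Θ) i else 0)
          = ε * ∑ i, (if G.Adj j i then Θ i else 0) := by
        rw [Finset.mul_sum]
        apply Finset.sum_congr rfl; intro i _
        by_cases h : G.Adj j i <;> simp [h]
      rw [h1]
      have h2 : (ε • Θ) j = ε * Θ j := rfl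
      rw [h2, mul_comm ε (Θ j), mul_assoc]
      rw [mul_div_cancel_left₀ _ (hΘne j), sub_self]
  refine ⟨key, ?_⟩
  intro nk N hnn hsum hN hker i
  obtain ⟨ε, hnk⟩ := (key nk).mp hker
  have hεN : ε = N := by
    rw [hnk] at hsum
    simp only [Pi.smul_apply, smul_eq_mul, ← Finset.mul_sum, hΘsum, mul_one] at hsum
    exact hsum
  rw [hnk]
  show ε * Θ i / N = Θ i
  rw [hεN, mul_comm, mul_div_assoc, div_self hN.ne', mul_one]
end

section
/- Let Θ ∈ ℝⁿ be a row-stochastic vector with all entries positive and let P be an n×n row-stochastic matrix with all diagonal entries positive satisfying Θ[i]·P[i,l] = Θ[l]·P[l,i] for all i,l. Let R⁺ ⊆ {1,…,n} be any subset of indices, and define the asynchronous matrix P̄ by: for i ∉ R⁺, P̄[i,i] = 1 and P̄[i,l] = 0 for l ≠ i; for i ∈ R⁺, P̄[i,l] = P[i,l] for l ∈ R⁺ with l ≠ i, P̄[i,l] = 0 for l ∉ R⁺, and P̄[i,i] = P[i,i] + Σ_{l ∉ R⁺} P[i,l]. Then: (1) P̄ is row-stochastic; (2) all diagonal entries of P̄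 are positive and all other entries are nonnegative; and (3) Σᵢ Θ[i]·P̄[i,l] = Θ[l] for every l, i.e., Θ P̄ = Θ. -/
open Matrix

/-- The asynchronous primary guidance matrix `P̄` obtained from a
row-stochastic, positive-diagonal, `Θ`-reversible matrix `P` and a set `R⁺` of ready bins
is row-stochastic, has positive diagonal and nonnegative entries, and keeps `Θ`
stationary: `∑ i, Θ i * P̄ i l = Θ l` for every `l`, i.e. `Θ P̄ = Θ`. -/
theorem asynchronous_matrix_properties
    (n : ℕ)
    (Θ : Fin n → ℝ) (hΘpos : ∀ i, 0 < Θ i) (hΘsum : ∑ i, Θ i = 1)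
    (P : Matrix (Fin n) (Fin n) ℝ)
    (hPnn : ∀ i l, 0 ≤ P i l) (hProw : ∀ i, ∑ l, P i l = 1)
    (hPdiag : ∀ i, 0 < P i i)
    (hPrev : ∀ i l, Θ i * P i l = Θ l * P l i)
    (R : Finset (Fin n))
    (Pbar : Matrix (Fin n) (Fin n) ℝ)
    (hout : ∀ i, i ∉ R → Pbar i i = 1 ∧ ∀ l, l ≠ i → Pbar i l = 0)
    (hin : ∀ i, i ∈ R →
      (∀ l, l ∈ R → l ≠ i → Pbar i l = P i l) ∧
      (∀ l, l ∉ R → Pbar i l = 0) ∧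
      Pbar i i = P i i + ∑ l ∈ Rᶜ, P i l) :
    ((∀ i l, 0 ≤ Pbar i l) ∧ (∀ i, ∑ l, Pbar i l = 1)) ∧
    ((∀ i, 0 < Pbar i i) ∧ (∀ i l, 0 ≤ Pbar i l)) ∧
    ((∀ l, ∑ i, Θ i * Pbar i l = Θ l) ∧ Θ ᵥ* Pbar = Θ) := by
  have hnn : ∀ i l, 0 ≤ Pbar i l := by
    intro i l
    by_cases hi : i ∈ R
    · obtain ⟨h1, h2, h3⟩ := hin i hi
      by_cases hl : l ∈ R
      · by_cases hli : l = i
        · subst hli; rw [h3]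
          have : 0 ≤ ∑ k ∈ Rᶜ, P l k := Finset.sum_nonneg fun k _ => hPnn l k
          linarith [hPnn l l]
        · rw [h1 l hl hli]; exact hPnn i l
      · rw [h2 l hl]
    · obtain ⟨h1, h2⟩ := hout i hi
      by_cases hli : l = i
      · subst hli; rw [h1]; norm_num
      · rw [h2 l hli]
  have hrow : ∀ i, ∑ l, Pbar i l = 1 := by
    intro i
    by_cases hi : i ∈ R
    · obtain ⟨h1, h2, h3⟩ := hin i hi
      rw [← Finset.sum_add_sum_compl R]
      have e2 : ∑ l ∈ Rᶜ, Pbar i l = 0 :=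
        Finset.sum_eq_zero fun l hl => h2 l (Finset.mem_compl.mp hl)
      rw [e2, add_zero, ← Finset.add_sum_erase R _ hi, h3]
      have e3 : ∑ l ∈ R.erase i, Pbar i l = ∑ l ∈ R.erase i, P i l :=
        Finset.sum_congr rfl fun l hl =>
          h1 l (Finset.mem_of_mem_erase hl) (Finset.ne_of_mem_erase hl)
      rw [e3]
      have h := hProw i
      rw [← Finset.sum_add_sum_compl R (P i), ← Finset.add_sum_erase R _ hi] at h
      linarith
    · obtain ⟨h1, h2⟩ := hout i hi
      rw [Finset.sum_eq_single i (fun l _ hl => h2 l hl) (by simp), h1]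
  have hdiag : ∀ i, 0 < Pbar i i := by
    intro i
    by_cases hi : i ∈ R
    · rw [(hin i hi).2.2]
      have : 0 ≤ ∑ k ∈ Rᶜ, P i k := Finset.sum_nonneg fun k _ => hPnn i k
      linarith [hPdiag i]
    · rw [(hout i hi).1]; norm_num
  have hstat : ∀ l, ∑ i, Θ i * Pbar i l = Θ l := by
    intro l
    rw [← Finset.sum_add_sum_compl R]
    by_cases hl : l ∈ R
    · have e2 : ∑ i ∈ Rᶜ, Θ i * Pbar i l = 0 := by
        apply Finset.sum_eq_zero; intro i hi
        have hi' := Finset.mem_compl.mp hi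
        have hne : l ≠ i := fun h => hi' (h ▸ hl)
        rw [(hout i hi').2 l hne, mul_zero]
      rw [e2, add_zero, ← Finset.add_sum_erase R _ hl]
      have e3 : ∑ i ∈ R.erase l, Θ i * Pbar i l = ∑ i ∈ R.erase l, Θ l * P l i := by
        apply Finset.sum_congr rfl; intro i hi
        have hiR := Finset.mem_of_mem_erase hi
        have hne : i ≠ l := Finset.ne_of_mem_erase hi
        rw [(hin i hiR).1 l hl hne.symm]
        exact hPrev i l
      rw [e3, (hin l hl).2.2, ← Finset.mul_sum]
      have h := hProw l
      rw [← Finset.sum_add_sum_compl R (P l), ← Finset.add_sum_erase R _ hl] at h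
      linear_combination Θ l * h
    · have e1 : ∑ i ∈ R, Θ i * Pbar i l = 0 := by
        apply Finset.sum_eq_zero; intro i hi
        rw [(hin i hi).2.1 l hl, mul_zero]
      rw [e1, zero_add, Finset.sum_eq_single l]
      · rw [(hout l hl).1, mul_one]
      · intro i hi hne
        rw [(hout i (Finset.mem_compl.mp hi)).2 l (Ne.symm hne), mul_zero]
      · intro h; exact absurd (Finset.mem_compl.mpr hl) h
  refine ⟨⟨hnn, hrow⟩, ⟨hdiag, hnn⟩, hstat, ?_⟩
  funext l
  simpa [Matrix.vecMul, dotProduct] using hstat l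
end

section
/- Let A_{k₁}, A_{k₁+1}, …, A_{k₂−1} be n×n nonnegative matrices, each with all diagonal entries positive. If the sum Σ_{k=k₁}^{k₂−1} A_k is irreducible (equivalently, the union of the underlying directed graphs of the A_k is strongly connected), then the product A_{k₁}·A_{k₁+1}⋯A_{k₂−1} is irreducible. -/
open Matrix

private lemma entry_nonneg_mul {n : ℕ} {B C : Matrix (Fin n) (Fin n) ℝ}
    (hB : ∀ i l, 0 ≤ B i l) (hC : ∀ i l, 0 ≤ C i l) : ∀ i l, 0 ≤ (B * C) i l := by
  intro i l
  rw [Matrix.mul_apply]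
  exact Finset.sum_nonneg fun j _ => mul_nonneg (hB i j) (hC j l)

private lemma pow_entry_nonneg {n : ℕ} {S : Matrix (Fin n) (Fin n) ℝ}
    (hS : ∀ i l, 0 ≤ S i l) : ∀ m i l, 0 ≤ (S ^ m) i l := by
  intro m
  induction m with
  | zero =>
    intro i l
    rw [pow_zero]
    by_cases h : i = l <;> simp [Matrix.one_apply, h]
  | succ m ih =>
    rw [pow_succ]
    exact entry_nonneg_mul ih hS

private lemma listprod_pos {n : ℕ} :
    ∀ L : List (Matrix (Fin n) (Fin n) ℝ),
      (∀ B ∈ L, (∀ i l, 0 ≤ B i l) ∧ (∀ i, 0 < B i i)) →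
      (∀ i l, 0 ≤ L.prod i l) ∧ (∀ i, 0 < L.prod i i) ∧
      (∀ i l, (∃ B ∈ L, 0 < B i l) → 0 < L.prod i l) := by
  intro L
  induction L with
  | nil =>
    intro _
    refine ⟨?_, ?_, ?_⟩
    · intro i l
      simp only [List.prod_nil]
      by_cases h : i = l <;> simp [Matrix.one_apply, h]
    · intro i; simp [Matrix.one_apply]
    · rintro i l ⟨B, hB, -⟩; simp at hB
  | cons B L ih =>
    intro hall
    have hB := hall B (by simp)
    have hL := ih (fun C hC => hall C (by simp [hC]))
    obtain ⟨hLnn, hLdiag, hLarc⟩ := hL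
    rw [List.prod_cons]
    refine ⟨entry_nonneg_mul hB.1 hLnn, ?_, ?_⟩
    · intro i
      rw [Matrix.mul_apply]
      refine Finset.sum_pos' (fun j _ => mul_nonneg (hB.1 i j) (hLnn j i)) ?_
      exact ⟨i, Finset.mem_univ i, mul_pos (hB.2 i) (hLdiag i)⟩
    · rintro i l ⟨C, hC, hCpos⟩
      rw [Matrix.mul_apply]
      refine Finset.sum_pos' (fun j _ => mul_nonneg (hB.1 i j) (hLnn j l)) ?_
      rcases List.mem_cons.mp hC with rfl | hC'
      · exact ⟨l, Finset.mem_univ l, mul_pos hCpos (hLdiag l)⟩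
      · exact ⟨i, Finset.mem_univ i, mul_pos (hB.2 i) (hLarc i l ⟨C, hC', hCpos⟩)⟩

private lemma pow_pos_transfer {n : ℕ} {S U : Matrix (Fin n) (Fin n) ℝ}
    (hS : ∀ i l, 0 ≤ S i l) (hU : ∀ i l, 0 ≤ U i l)
    (h : ∀ i l, 0 < S i l → 0 < U i l) :
    ∀ m i l, 0 < (S ^ m) i l → 0 < (U ^ m) i l := by
  intro m
  induction m with
  | zero =>
    intro i l hp
    rw [pow_zero] at hp ⊢
    exact hp
  | succ m ih =>
    intro i l hp
    rw [pow_succ, Matrix.mul_apply] at hp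
    have : ∃ j, 0 < (S ^ m) i j * S j l := by
      by_contra hcon
      push_neg at hcon
      have hle : (∑ j, (S ^ m) i j * S j l) ≤ 0 :=
        Finset.sum_nonpos fun j _ => hcon j
      linarith
    obtain ⟨j, hj⟩ := this
    rw [mul_pos_iff] at hj
    rcases hj with ⟨h1, h2⟩ | ⟨h1, _⟩
    · rw [pow_succ, Matrix.mul_apply]
      refine Finset.sum_pos' (fun j' _ => mul_nonneg (pow_entry_nonneg hU m i j') (hU j' l)) ?_
      exact ⟨j, Finset.mem_univ j, mul_pos (ih i j h1) (h j l h2)⟩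
    · exact absurd (pow_entry_nonneg hS m i j) (not_le.mpr h1)

/-- If `A k₁, …, A (k₂-1)` are nonnegative matrices with positive
diagonal entries and the sum `∑_{k=k₁}^{k₂-1} A k` is irreducible, then the product
`A k₁ * A (k₁+1) * ⋯ * A (k₂-1)` is irreducible. -/
theorem product_of_union_strongly_connected_irreducible
    (n : ℕ) (k₁ k₂ : ℕ) (hk : k₁ < k₂)
    (A : ℕ → Matrix (Fin n) (Fin n) ℝ)
    (hnn : ∀ k, k₁ ≤ k → k < k₂ → ∀ i l, 0 ≤ A k i l)
    (hdiag : ∀ k, k₁ ≤ k → k < k₂ → ∀ i, 0 < A k i i)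
    (hsum_irr : ∀ i l, ∃ m : ℕ, 0 < m ∧
      0 < ((∑ k ∈ Finset.Ico k₁ k₂, A k) ^ m) i l)
    (U : Matrix (Fin n) (Fin n) ℝ)
    (hU : U = ((List.range (k₂ - k₁)).map (fun t => A (k₁ + t))).prod) :
    ∀ i l, ∃ m : ℕ, 0 < m ∧ 0 < (U ^ m) i l := by
  set L : List (Matrix (Fin n) (Fin n) ℝ) :=
    (List.range (k₂ - k₁)).map (fun t => A (k₁ + t)) with hL
  have hmem : ∀ B ∈ L, (∀ i l, 0 ≤ B i l) ∧ (∀ i, 0 < B i i) := by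
    intro B hB
    rw [hL, List.mem_map] at hB
    obtain ⟨t, ht, rfl⟩ := hB
    rw [List.mem_range] at ht
    have h1 : k₁ ≤ k₁ + t := Nat.le_add_right _ _
    have h2 : k₁ + t < k₂ := by omega
    exact ⟨hnn _ h1 h2, hdiag _ h1 h2⟩
  obtain ⟨hUnn, hUdiag, hUarc⟩ := listprod_pos L hmem
  set S : Matrix (Fin n) (Fin n) ℝ := ∑ k ∈ Finset.Ico k₁ k₂, A k with hSdef
  have hSnn : ∀ i l, 0 ≤ S i l := by
    intro i l
    rw [hSdef]
    simp only [Matrix.sum_apply]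
    refine Finset.sum_nonneg fun k hkm => ?_
    rw [Finset.mem_Ico] at hkm
    exact hnn k hkm.1 hkm.2 i l
  have htrans : ∀ i l, 0 < S i l → 0 < U i l := by
    intro i l hpos
    rw [hSdef] at hpos
    simp only [Matrix.sum_apply] at hpos
    have : ∃ k ∈ Finset.Ico k₁ k₂, 0 < A k i l := by
      by_contra hcon
      push_neg at hcon
      have hle : (∑ k ∈ Finset.Ico k₁ k₂, A k i l) ≤ 0 := by
        refine Finset.sum_nonpos fun k hkm => hcon k hkm
      linarith
    obtain ⟨k, hkm, hkpos⟩ := this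
    rw [Finset.mem_Ico] at hkm
    rw [hU]
    refine hUarc i l ⟨A k, ?_, hkpos⟩
    rw [hL, List.mem_map]
    exact ⟨k - k₁, by rw [List.mem_range]; omega, by simp only [Nat.add_sub_cancel' hkm.1]⟩
  intro i l
  obtain ⟨m, hm, hpos⟩ := hsum_irr i l
  refine ⟨m, hm, ?_⟩
  have hUnn' : ∀ i l, 0 ≤ U i l := by intro i l; rw [hU]; exact hUnn i l
  exact pow_pos_transfer hSnn hUnn' htrans m i l hpos
end

section
/- Let n ≥ 1 and let Θ ∈ ℝⁿ be a row-stochastic vector with all entries positive. For each integer k ≥ k₀ let P̄_k and S_k be n×n row-stochastic matrices and let W_k be the diagonal matrix with diagonal entries ω_k[i] = e^{−τk}·G_k[i], where τ > 0 and G_k[i] ∈ [0,1], and set M̄_k = (I − W_k)P̄_k + W_k S_k. Assume: (i) each P̄_k has all diagonal entries positive and Θ P̄_k = Θ; (ii) there exists an infinite sequence of non-overlapping time intervals [k_i, k_{i+1}), i = 0,1,2,…, such that on each interval the sum Σ_{k=k_i}^{k_{i+1}−1} P̄_k is irreducible; and (iii) there exists γ > 0 such that every positive entry of every product M̄_{k_i}·M̄_{k_i+1}⋯M̄_{k_{i+1}−1}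 over such an interval is at least γ. Then for every row-stochastic vector x_{k₀} ∈ ℝⁿ, the products x_{k₀}·M̄_{k₀}·M̄_{k₀+1}⋯M̄_{k−1} converge entrywise to Θ as k → ∞. -/
/-!
Write `Π(j, k) = M̄_j ⋯ M̄_{k-1}` and measure row vectors in the ℓ¹ norm. Since `ω_k ≤ e^{-τk}` and
`Θ P̄_k = Θ`, `‖Θ M̄_k - Θ‖ ≤ 2e^{-τk}`, so `‖Θ Π(j, k) - Θ‖ = O(e^{-τj})` uniformly in `k`.
For `k ≥ 1` the weights are `< 1`, so `M̄_k` keeps the positive diagonal and every positive entry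
of `P̄_k`. Each interval product is then a stochastic matrix with positive diagonal whose graph is
strongly connected, so a product of `n` of them has all entries `≥ γⁿ` and shrinks the ℓ¹ norm of
zero-sum vectors by the factor `1 - nγⁿ`. Splitting
`x Π(k₀, k) - Θ = (x Π(k₀, j) - Θ) Π(j, k) + (Θ Π(j, k) - Θ)` with `j` large, and then `k` larger,
makes both terms small.
-/

open Matrix Finset Filter Topology

section prodIco

variable {M : Type*} [Monoid M] (f : ℕ → M)

def prodIco (j k : ℕ) : M := ((List.range (k - j)).map fun t => f (j + t)).prod

@[simp]
theorem prodIco_self (j : ℕ) : prodIco f j j = 1 := by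
  simp [prodIco]

theorem prodIco_succ {j k : ℕ} (h : j ≤ k) : prodIco f j (k + 1) = prodIco f j k * f k := by
  rw [prodIco, show k + 1 - j = k - j + 1 by omega, List.prod_range_succ, prodIco,
    Nat.add_sub_cancel' h]

theorem prodIco_mul_prodIco {j k l : ℕ} (hjk : j ≤ k) (hkl : k ≤ l) :
    prodIco f j k * prodIco f k l = prodIco f j l := by
  induction l, hkl using Nat.le_induction with
  | base => rw [prodIco_self, mul_one]
  | succ l hkl ih => rw [prodIco_succ f hkl, prodIco_succ f (hjk.trans hkl), ← mul_assoc, ih]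

theorem prodIco_prodIco {κ : ℕ → ℕ} (hκ : Monotone κ) {p q : ℕ} (hpq : p ≤ q) :
    prodIco (fun i => prodIco f (κ i) (κ (i + 1))) p q = prodIco f (κ p) (κ q) := by
  induction q, hpq using Nat.le_induction with
  | base => simp
  | succ q hpq ih =>
    rw [prodIco_succ _ hpq, ih, prodIco_mul_prodIco f (hκ hpq) (hκ q.le_succ)]

theorem prodIco_mem {S : Submonoid M} {j k : ℕ} (hf : ∀ t, j ≤ t → t < k → f t ∈ S) :
    prodIco f j k ∈ S :=
  S.list_prod_mem fun _ hx => by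
    obtain ⟨t, ht, rfl⟩ := List.mem_map.1 hx
    exact hf _ (by omega) (by rw [List.mem_range] at ht; omega)

end prodIco

section l1Norm

variable {ι : Type*} [Fintype ι]

noncomputable def l1Norm (w : ι → ℝ) : ℝ := ∑ i, |w i|

theorem l1Norm_nonneg (w : ι → ℝ) : 0 ≤ l1Norm w :=
  sum_nonneg fun i _ => abs_nonneg (w i)

theorem abs_le_l1Norm (w : ι → ℝ) (i : ι) : |w i| ≤ l1Norm w :=
  single_le_sum (fun i _ => abs_nonneg (w i)) (mem_univ i)

theorem l1Norm_add_le (u v : ι → ℝ) : l1Norm (u + v) ≤ l1Norm u + l1Norm v := by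
  rw [l1Norm, l1Norm, l1Norm, ← sum_add_distrib]
  exact sum_le_sum fun i _ => abs_add_le _ _

theorem l1Norm_sub_le (u v : ι → ℝ) : l1Norm (u - v) ≤ l1Norm u + l1Norm v := by
  rw [l1Norm, l1Norm, l1Norm, ← sum_add_distrib]
  exact sum_le_sum fun i _ => abs_sub _ _

theorem l1Norm_of_nonneg {w : ι → ℝ} (hw : ∀ i, 0 ≤ w i) : l1Norm w = ∑ i, w i :=
  sum_congr rfl fun i _ => abs_of_nonneg (hw i)

theorem tendsto_apply_of_tendsto_l1Norm_sub {α : Type*} {l : Filter α} {f : α → ι → ℝ}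
    {v : ι → ℝ} (h : Tendsto (fun a => l1Norm (f a - v)) l (𝓝 0)) (i : ι) :
    Tendsto (fun a => f a i) l (𝓝 (v i)) :=
  tendsto_iff_norm_sub_tendsto_zero.2 <|
    squeeze_zero (fun _ => norm_nonneg _) (fun a => abs_le_l1Norm (f a - v) i) h

theorem l1Norm_vecMul_le_of_sum_row {B : Matrix ι ι ℝ} {s : ℝ} (hB : ∀ i l, 0 ≤ B i l)
    (hs : ∀ i, ∑ l, B i l = s) (w : ι → ℝ) : l1Norm (w ᵥ* B) ≤ s * l1Norm w :=
  calc l1Norm (w ᵥ* B) ≤ ∑ l, ∑ i, |w i| * B i l := sum_le_sum fun l _ =>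
        (abs_sum_le_sum_abs _ _).trans_eq <| sum_congr rfl fun i _ => by
          rw [abs_mul, abs_of_nonneg (hB i l)]
    _ = s * l1Norm w := by
        rw [sum_comm, l1Norm, mul_sum]
        exact sum_congr rfl fun i _ => by rw [← mul_sum, hs, mul_comm]

variable [DecidableEq ι] {A : Matrix ι ι ℝ}

theorem sum_vecMul_of_mem_rowStochastic (hA : A ∈ rowStochastic ℝ ι) (w : ι → ℝ) :
    ∑ l, (w ᵥ* A) l = ∑ i, w i := by
  simp only [vecMul, dotProduct]
  rw [sum_comm]
  simp [← mul_sum, sum_row_of_mem_rowStochastic hA]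

theorem l1Norm_vecMul_le (hA : A ∈ rowStochastic ℝ ι) (w : ι → ℝ) :
    l1Norm (w ᵥ* A) ≤ l1Norm w := by
  simpa using l1Norm_vecMul_le_of_sum_row (fun _ _ => nonneg_of_mem_rowStochastic hA)
    (sum_row_of_mem_rowStochastic hA) w

/-- Since `w` sums to zero, `c` may be subtracted from every entry of `A` without changing
`w ᵥ* A`; what remains is nonnegative with row sums `1 - |ι| c`. -/
theorem l1Norm_vecMul_le_of_le_apply (hA : A ∈ rowStochastic ℝ ι) {c : ℝ}
    (hc : ∀ i l, c ≤ A i l) {w : ι → ℝ} (hw : ∑ i, w i = 0) :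
    l1Norm (w ᵥ* A) ≤ (1 - Fintype.card ι * c) * l1Norm w := by
  have hconst : w ᵥ* (of fun _ _ => c : Matrix ι ι ℝ) = 0 := by
    ext l
    simp [vecMul, dotProduct, ← sum_mul, hw]
  rw [← sub_zero (w ᵥ* A), ← hconst, ← vecMul_sub]
  refine l1Norm_vecMul_le_of_sum_row (fun i l => sub_nonneg.2 (hc i l)) (fun i => ?_) w
  simp [sum_sub_distrib, sum_row_of_mem_rowStochastic hA]

end l1Norm

section convergence

variable {ι : Type*} [Fintype ι] [DecidableEq ι] {M : ℕ → Matrix ι ι ℝ} {j : ℕ}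

theorem prodIco_mem_rowStochastic (hM : ∀ t ≥ j, M t ∈ rowStochastic ℝ ι) (k : ℕ) :
    prodIco M j k ∈ rowStochastic ℝ ι :=
  prodIco_mem M fun t ht _ => hM t ht

theorem prodIco_apply_nonneg (hM : ∀ t ≥ j, M t ∈ rowStochastic ℝ ι) (k : ℕ) (a b : ι) :
    0 ≤ prodIco M j k a b :=
  nonneg_of_mem_rowStochastic (prodIco_mem_rowStochastic hM k)

theorem l1Norm_vecMul_prodIco_sub_le {Θ : ι → ℝ} {ε : ℕ → ℝ}
    (hM : ∀ t ≥ j, M t ∈ rowStochastic ℝ ι) (hε : ∀ t ≥ j, l1Norm (Θ ᵥ* M t - Θ) ≤ ε t)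
    {k : ℕ} (hjk : j ≤ k) :
    l1Norm (Θ ᵥ* prodIco M j k - Θ) ≤ ∑ t ∈ Ico j k, ε t := by
  induction k, hjk using Nat.le_induction with
  | base => simp [l1Norm]
  | succ k hjk ih =>
    have hsplit : Θ ᵥ* prodIco M j (k + 1) - Θ
        = (Θ ᵥ* prodIco M j k - Θ) ᵥ* M k + (Θ ᵥ* M k - Θ) := by
      rw [prodIco_succ M hjk, ← vecMul_vecMul, sub_vecMul]
      abel
    rw [hsplit, sum_Ico_succ_top hjk]
    exact (l1Norm_add_le _ _).trans <|
      add_le_add ((l1Norm_vecMul_le (hM k hjk) _).trans ih) (hε k hjk)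

theorem l1Norm_vecMul_prodIco_le_pow {b : ℕ → ℕ} (hb : Monotone b) {r : ℝ} (hr : 0 ≤ r)
    (hM : ∀ t ≥ b 0, M t ∈ rowStochastic ℝ ι)
    (hcontr : ∀ p (w : ι → ℝ), ∑ i, w i = 0 →
      l1Norm (w ᵥ* prodIco M (b p) (b (p + 1))) ≤ r * l1Norm w)
    (p m : ℕ) {w : ι → ℝ} (hw : ∑ i, w i = 0) :
    l1Norm (w ᵥ* prodIco M (b p) (b (p + m))) ≤ r ^ m * l1Norm w := by
  induction m with
  | zero => simp
  | succ m ih =>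
    have hprod : prodIco M (b p) (b (p + m)) ∈ rowStochastic ℝ ι :=
      prodIco_mem_rowStochastic (fun t ht => hM t ((hb (Nat.zero_le p)).trans ht)) _
    rw [← add_assoc, ← prodIco_mul_prodIco M (hb (p.le_add_right m)) (hb (p + m).le_succ),
      ← vecMul_vecMul]
    calc _ ≤ r * l1Norm (w ᵥ* prodIco M (b p) (b (p + m))) :=
          hcontr _ _ (by rw [sum_vecMul_of_mem_rowStochastic hprod, hw])
      _ ≤ r * (r ^ m * l1Norm w) := mul_le_mul_of_nonneg_left ih hr
      _ = r ^ (m + 1) * l1Norm w := by ring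

theorem exists_l1Norm_vecMul_prodIco_le {b : ℕ → ℕ} (hb : StrictMono b) {r : ℝ} (hr : r < 1)
    (hM : ∀ t ≥ b 0, M t ∈ rowStochastic ℝ ι)
    (hcontr : ∀ p (w : ι → ℝ), ∑ i, w i = 0 →
      l1Norm (w ᵥ* prodIco M (b p) (b (p + 1))) ≤ r * l1Norm w)
    (hj : b 0 ≤ j) {ε : ℝ} (hε : 0 < ε) :
    ∃ N, ∀ k ≥ N, ∀ w : ι → ℝ, ∑ i, w i = 0 →
      l1Norm (w ᵥ* prodIco M j k) ≤ ε * l1Norm w := by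
  set r' := max r 0
  have hcontr' : ∀ p (w : ι → ℝ), ∑ i, w i = 0 →
      l1Norm (w ᵥ* prodIco M (b p) (b (p + 1))) ≤ r' * l1Norm w := fun p w hw =>
    (hcontr p w hw).trans (mul_le_mul_of_nonneg_right (le_max_left r 0) (l1Norm_nonneg w))
  obtain ⟨m, hm⟩ := exists_pow_lt_of_lt_one hε (max_lt hr one_pos)
  refine ⟨b (j + m), fun k hk w hw => ?_⟩
  have hjb : j ≤ b j := hb.le_apply
  have hbb : b j ≤ b (j + m) := hb.monotone (j.le_add_right m)
  have hstoch : ∀ {s u}, j ≤ s → prodIco M s u ∈ rowStochastic ℝ ι := fun hs =>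
    prodIco_mem_rowStochastic (fun t ht => hM t (hj.trans (hs.trans ht))) _
  calc l1Norm (w ᵥ* prodIco M j k)
      = l1Norm ((w ᵥ* prodIco M j (b j) ᵥ* prodIco M (b j) (b (j + m))) ᵥ*
          prodIco M (b (j + m)) k) := by
        rw [vecMul_vecMul, vecMul_vecMul, prodIco_mul_prodIco M hbb hk,
          prodIco_mul_prodIco M hjb (hbb.trans hk)]
    _ ≤ l1Norm (w ᵥ* prodIco M j (b j) ᵥ* prodIco M (b j) (b (j + m))) :=
        l1Norm_vecMul_le (hstoch (hjb.trans hbb)) _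
    _ ≤ r' ^ m * l1Norm (w ᵥ* prodIco M j (b j)) :=
        l1Norm_vecMul_prodIco_le_pow hb.monotone (le_max_right r 0) hM hcontr' j m
          (by rw [sum_vecMul_of_mem_rowStochastic (hstoch le_rfl), hw])
    _ ≤ r' ^ m * l1Norm w :=
        mul_le_mul_of_nonneg_left (l1Norm_vecMul_le (hstoch le_rfl) w)
          (pow_nonneg (le_max_right r 0) m)
    _ ≤ ε * l1Norm w := mul_le_mul_of_nonneg_right hm.le (l1Norm_nonneg w)

theorem tendsto_l1Norm_vecMul_prodIco_sub {Θ x : ι → ℝ} {k₀ : ℕ} {C q r : ℝ} {b : ℕ → ℕ}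
    (hM : ∀ t ≥ k₀, M t ∈ rowStochastic ℝ ι) (hΘ : ∀ i, 0 ≤ Θ i) (hΘsum : ∑ i, Θ i = 1)
    (hC : 0 ≤ C) (hq0 : 0 ≤ q) (hq1 : q < 1)
    (hstat : ∀ t ≥ k₀, l1Norm (Θ ᵥ* M t - Θ) ≤ C * q ^ t)
    (hb : StrictMono b) (hb0 : k₀ ≤ b 0) (hr : r < 1)
    (hcontr : ∀ p (w : ι → ℝ), ∑ i, w i = 0 →
      l1Norm (w ᵥ* prodIco M (b p) (b (p + 1))) ≤ r * l1Norm w)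
    (hx : ∀ i, 0 ≤ x i) (hxsum : ∑ i, x i = 1) :
    Tendsto (fun k => l1Norm (x ᵥ* prodIco M k₀ k - Θ)) atTop (𝓝 0) := by
  rw [Metric.tendsto_atTop]
  intro ε hε
  have htail : Tendsto (fun j => C * q ^ j / (1 - q)) atTop (𝓝 0) := by
    simpa using ((tendsto_pow_atTop_nhds_zero_of_lt_one hq0 hq1).const_mul C).div_const (1 - q)
  obtain ⟨j, hjtail, hj⟩ :=
    ((htail.eventually (gt_mem_nhds (half_pos hε))).and (eventually_ge_atTop (b 0))).exists
  obtain ⟨N, hN⟩ := exists_l1Norm_vecMul_prodIco_le hb hr (fun t ht => hM t (hb0.trans ht))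
    hcontr hj (show 0 < ε / 4 by positivity)
  refine ⟨max N j, fun k hk => ?_⟩
  have hk₀j : k₀ ≤ j := hb0.trans hj
  have hjk : j ≤ k := (le_max_right N j).trans hk
  set y := x ᵥ* prodIco M k₀ j
  have hy : prodIco M k₀ j ∈ rowStochastic ℝ ι := prodIco_mem_rowStochastic hM j
  have hyΘ : l1Norm (y - Θ) ≤ 2 := by
    have := l1Norm_sub_le y Θ
    rwa [l1Norm_of_nonneg (nonneg_vecMul_of_mem_rowStochastic hy hx), l1Norm_of_nonneg hΘ,
      sum_vecMul_of_mem_rowStochastic hy, hxsum, hΘsum, one_add_one_eq_two] at this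
  have hforget : l1Norm ((y - Θ) ᵥ* prodIco M j k) ≤ ε / 4 * 2 :=
    (hN k (le_of_max_le_left hk) _ (by simp [sum_sub_distrib, sum_vecMul_of_mem_rowStochastic hy,
      hxsum, hΘsum, y])).trans (mul_le_mul_of_nonneg_left hyΘ (by positivity))
  have hstationary : l1Norm (Θ ᵥ* prodIco M j k - Θ) ≤ C * q ^ j / (1 - q) :=
    (l1Norm_vecMul_prodIco_sub_le (fun t ht => hM t (hk₀j.trans ht))
      (fun t ht => hstat t (hk₀j.trans ht)) hjk).trans <| by
        rw [← mul_sum, mul_div_assoc]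
        exact mul_le_mul_of_nonneg_left (geom_sum_Ico_le_of_lt_one hq0 hq1) hC
  have hsplit : x ᵥ* prodIco M k₀ k - Θ = (y - Θ) ᵥ* prodIco M j k + (Θ ᵥ* prodIco M j k - Θ) := by
    rw [sub_vecMul, vecMul_vecMul, prodIco_mul_prodIco M hk₀j hjk]
    abel
  rw [Real.dist_eq, sub_zero, abs_of_nonneg (l1Norm_nonneg _), hsplit]
  linarith [l1Norm_add_le ((y - Θ) ᵥ* prodIco M j k) (Θ ᵥ* prodIco M j k - Θ)]

end convergence

namespace Matrix

variable {ι : Type*} [Fintype ι] {A B P : Matrix ι ι ℝ}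

theorem mul_apply_pos_iff (hA : ∀ i j, 0 ≤ A i j) (hB : ∀ i j, 0 ≤ B i j) {a b : ι} :
    0 < (A * B) a b ↔ ∃ c, 0 < A a c ∧ 0 < B c b := by
  rw [mul_apply, sum_pos_iff_of_nonneg fun c _ => mul_nonneg (hA a c) (hB c b)]
  refine ⟨fun ⟨c, _, h⟩ => ⟨c, (hA a c).lt_of_ne' (left_ne_zero_of_mul h.ne'),
    (hB c b).lt_of_ne' (right_ne_zero_of_mul h.ne')⟩,
    fun ⟨c, h1, h2⟩ => ⟨c, mem_univ c, mul_pos h1 h2⟩⟩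

theorem le_mul_apply_of_pos (hA : ∀ i j, 0 ≤ A i j) (hB : ∀ i j, 0 ≤ B i j) {α β : ℝ}
    (hα : ∀ i j, 0 < A i j → α ≤ A i j) (hβ : ∀ i j, 0 < B i j → β ≤ B i j) (hβ0 : 0 ≤ β)
    {a b : ι} (h : 0 < (A * B) a b) : α * β ≤ (A * B) a b := by
  obtain ⟨c, hac, hcb⟩ := (mul_apply_pos_iff hA hB).1 h
  calc α * β ≤ A a c * B c b := mul_le_mul (hα a c hac) (hβ c b hcb) hβ0 hac.le
    _ ≤ (A * B) a b := by
      rw [mul_apply]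
      exact single_le_sum (fun d _ => mul_nonneg (hA a d) (hB d b)) (mem_univ c)

/-- The cut form of strong connectivity of the graph with an edge `u → v` iff `0 < A u v`. -/
def IsStronglyConnected (A : Matrix ι ι ℝ) : Prop :=
  ∀ R : Finset ι, R.Nonempty → R ≠ univ → ∃ u ∈ R, ∃ v ∉ R, 0 < A u v

theorem IsStronglyConnected.mono (hA : A.IsStronglyConnected)
    (hAB : ∀ u v, 0 < A u v → 0 < B u v) : B.IsStronglyConnected := fun R hR hRu =>
  let ⟨u, hu, v, hv, huv⟩ := hA R hR hRu
  ⟨u, hu, v, hv, hAB u v huv⟩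

variable [DecidableEq ι]

theorem exists_pos_apply_of_pow_apply_pos (hA : ∀ i j, 0 ≤ A i j) {R : Finset ι} {c d : ι}
    (hc : c ∈ R) (hd : d ∉ R) {m : ℕ} (h : 0 < (A ^ m) c d) : ∃ u ∈ R, ∃ v ∉ R, 0 < A u v := by
  induction m generalizing c with
  | zero =>
    rw [pow_zero, one_apply_ne (ne_of_mem_of_not_mem hc hd)] at h
    exact absurd h (lt_irrefl 0)
  | succ m ih =>
    rw [pow_succ', mul_apply_pos_iff hA (pow_apply_nonneg hA m)] at h
    obtain ⟨e, hce, hed⟩ := h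
    by_cases he : e ∈ R
    · exact ih he hed
    · exact ⟨c, hc, e, he, hce⟩

theorem isStronglyConnected_of_pow_apply_pos (hA : ∀ i j, 0 ≤ A i j)
    (h : ∀ a b, ∃ m : ℕ, 0 < (A ^ m) a b) : A.IsStronglyConnected := by
  intro R ⟨c, hc⟩ hR
  obtain ⟨d, hd⟩ := by simpa [eq_univ_iff_forall] using hR
  obtain ⟨m, hm⟩ := h c d
  exact exists_pos_apply_of_pow_apply_pos hA hc hd hm

theorem min_card_le_card_filter_mul_apply_pos (hP : ∀ i j, 0 ≤ P i j) (hA : ∀ i j, 0 ≤ A i j)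
    (hdiag : ∀ a, 0 < A a a) (hconn : A.IsStronglyConnected) {a : ι} (hne : ∃ b, 0 < P a b) :
    min (Fintype.card ι) (#{b | 0 < P a b} + 1) ≤ #{b | 0 < (P * A) a b} := by
  set R : Finset ι := {b | 0 < P a b}
  set R' : Finset ι := {b | 0 < (P * A) a b}
  have hsub : R ⊆ R' := fun b hb => by
    simp only [R, R', mem_filter, mem_univ, true_and] at hb ⊢
    exact (mul_apply_pos_iff hP hA).2 ⟨b, hb, hdiag b⟩
  by_cases hR : R = univ
  · rw [eq_univ_of_forall fun b => hsub (hR ▸ mem_univ b), card_univ]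
    exact min_le_left _ _
  · obtain ⟨b, hb⟩ := hne
    obtain ⟨u, hu, v, hv, huv⟩ := hconn R ⟨b, by simpa [R] using hb⟩ hR
    have hv' : v ∈ R' := by
      simp only [R', mem_filter, mem_univ, true_and]
      exact (mul_apply_pos_iff hP hA).2 ⟨u, by simpa [R] using hu, huv⟩
    calc min _ _ ≤ #R + 1 := min_le_right _ _
      _ = #(insert v R) := (card_insert_of_notMem hv).symm
      _ ≤ #R' := card_le_card (insert_subset hv' hsub)

end Matrix

section positivity

variable {ι : Type*} [Fintype ι] [DecidableEq ι] {f : ℕ → Matrix ι ι ℝ} {j : ℕ}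

theorem prodIco_apply_self_pos (hf : ∀ t ≥ j, f t ∈ rowStochastic ℝ ι)
    (hdiag : ∀ t ≥ j, ∀ a, 0 < f t a a) {k : ℕ} (hjk : j ≤ k) (a : ι) :
    0 < prodIco f j k a a := by
  induction k, hjk using Nat.le_induction with
  | base => simp
  | succ k hjk ih =>
    rw [prodIco_succ f hjk, mul_apply_pos_iff (prodIco_apply_nonneg hf k)
      (fun _ _ => nonneg_of_mem_rowStochastic (hf k hjk))]
    exact ⟨a, ih, hdiag k hjk a⟩

theorem prodIco_apply_pos_of_pos (hf : ∀ t ≥ j, f t ∈ rowStochastic ℝ ι)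
    (hdiag : ∀ t ≥ j, ∀ a, 0 < f t a a) {t k : ℕ} (hjt : j ≤ t) (htk : t < k) {a b : ι}
    (h : 0 < f t a b) : 0 < prodIco f j k a b := by
  have hjt' : 0 < prodIco f j (t + 1) a b := by
    rw [prodIco_succ f hjt, mul_apply_pos_iff (prodIco_apply_nonneg hf t)
      (fun _ _ => nonneg_of_mem_rowStochastic (hf t hjt))]
    exact ⟨a, prodIco_apply_self_pos hf hdiag hjt a, h⟩
  have hf' : ∀ s ≥ t + 1, f s ∈ rowStochastic ℝ ι := fun s hs => hf s (by omega)
  rw [← prodIco_mul_prodIco f (hjt.trans t.le_succ) htk,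
    mul_apply_pos_iff (prodIco_apply_nonneg hf _) (prodIco_apply_nonneg hf' k)]
  exact ⟨b, hjt', prodIco_apply_self_pos hf' (fun s hs => hdiag s (by omega)) htk b⟩

theorem isStronglyConnected_prodIco (hf : ∀ t ≥ j, f t ∈ rowStochastic ℝ ι)
    (hdiag : ∀ t ≥ j, ∀ a, 0 < f t a a) {g : ℕ → Matrix ι ι ℝ}
    (hg : ∀ t ≥ j, ∀ u v, 0 < g t u v → 0 < f t u v) {k : ℕ}
    (h : (∑ t ∈ Ico j k, g t).IsStronglyConnected) : (prodIco f j k).IsStronglyConnected :=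
  h.mono fun u v huv => by
    rw [Matrix.sum_apply] at huv
    obtain ⟨t, ht, hpos⟩ := exists_lt_of_sum_lt (by simpa using huv : ∑ _ ∈ Ico j k, (0 : ℝ) < _)
    rw [mem_Ico] at ht
    exact prodIco_apply_pos_of_pos hf hdiag ht.1 ht.2 (hg t ht.1 u v hpos)

theorem min_card_le_card_filter_prodIco_apply_pos (hf : ∀ t ≥ j, f t ∈ rowStochastic ℝ ι)
    (hdiag : ∀ t ≥ j, ∀ a, 0 < f t a a) (hconn : ∀ t ≥ j, (f t).IsStronglyConnected)
    {k : ℕ} (hjk : j ≤ k) (a : ι) :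
    min (Fintype.card ι) (k - j + 1) ≤ #{b | 0 < prodIco f j k a b} := by
  induction k, hjk using Nat.le_induction with
  | base =>
    simp only [Nat.sub_self, zero_add]
    exact (min_le_right _ _).trans (one_le_card.2 ⟨a, by simp⟩)
  | succ k hjk ih =>
    rw [prodIco_succ f hjk]
    have := min_card_le_card_filter_mul_apply_pos (A := f k) (prodIco_apply_nonneg hf k)
      (fun _ _ => nonneg_of_mem_rowStochastic (hf k hjk)) (hdiag k hjk) (hconn k hjk)
      ⟨a, prodIco_apply_self_pos hf hdiag hjk a⟩
    omega

theorem prodIco_apply_pos (hf : ∀ t ≥ j, f t ∈ rowStochastic ℝ ι)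
    (hdiag : ∀ t ≥ j, ∀ a, 0 < f t a a) (hconn : ∀ t ≥ j, (f t).IsStronglyConnected)
    {k : ℕ} (hjk : j ≤ k) (hcard : Fintype.card ι ≤ k - j + 1) (a b : ι) :
    0 < prodIco f j k a b := by
  have h := min_card_le_card_filter_prodIco_apply_pos hf hdiag hconn hjk a
  rw [min_eq_left hcard] at h
  have huniv := eq_univ_of_card _ (le_antisymm (card_le_univ _) h)
  simpa using eq_univ_iff_forall.1 huniv b

theorem pow_le_prodIco_apply_of_pos (hf : ∀ t ≥ j, f t ∈ rowStochastic ℝ ι) {γ : ℝ}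
    (hγ : 0 ≤ γ) (hγf : ∀ t ≥ j, ∀ a b, 0 < f t a b → γ ≤ f t a b) {k : ℕ} (hjk : j ≤ k) :
    ∀ a b, 0 < prodIco f j k a b → γ ^ (k - j) ≤ prodIco f j k a b := by
  induction k, hjk using Nat.le_induction with
  | base =>
    intro a b h
    by_cases hab : a = b <;> simp_all [one_apply]
  | succ k hjk ih =>
    rw [prodIco_succ f hjk, show k + 1 - j = k - j + 1 by omega, pow_succ]
    exact fun a b => le_mul_apply_of_pos (prodIco_apply_nonneg hf k)
      (fun _ _ => nonneg_of_mem_rowStochastic (hf k hjk)) ih (hγf k hjk) hγ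

theorem l1Norm_vecMul_prodIco_le_of_isStronglyConnected {A : ℕ → Matrix ι ι ℝ} {γ : ℝ}
    (hγ : 0 ≤ γ) (hA : ∀ i, A i ∈ rowStochastic ℝ ι) (hdiag : ∀ i a, 0 < A i a a)
    (hconn : ∀ i, (A i).IsStronglyConnected) (hγA : ∀ i a b, 0 < A i a b → γ ≤ A i a b)
    (p : ℕ) {w : ι → ℝ} (hw : ∑ i, w i = 0) :
    l1Norm (w ᵥ* prodIco A p (p + Fintype.card ι))
      ≤ (1 - Fintype.card ι * γ ^ Fintype.card ι) * l1Norm w := by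
  have hA' : ∀ i ≥ p, A i ∈ rowStochastic ℝ ι := fun i _ => hA i
  have hle := p.le_add_right (Fintype.card ι)
  refine l1Norm_vecMul_le_of_le_apply (prodIco_mem_rowStochastic hA' _) (fun a b => ?_) hw
  have h := pow_le_prodIco_apply_of_pos hA' hγ (fun i _ => hγA i) hle a b
    (prodIco_apply_pos hA' (fun i _ => hdiag i) (fun i _ => hconn i) hle (by omega) a b)
  rwa [Nat.add_sub_cancel_left] at h

theorem l1Norm_vecMul_prodIco_intervals_le {g : ℕ → Matrix ι ι ℝ} {κ : ℕ → ℕ} (hκ : StrictMono κ)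
    (hf : ∀ t ≥ κ 0, f t ∈ rowStochastic ℝ ι) (hdiag : ∀ t ≥ κ 0, ∀ a, 0 < f t a a)
    (hgnn : ∀ t ≥ κ 0, ∀ u v, 0 ≤ g t u v) (hg : ∀ t ≥ κ 0, ∀ u v, 0 < g t u v → 0 < f t u v)
    (hirr : ∀ i a b, ∃ m : ℕ, 0 < ((∑ t ∈ Ico (κ i) (κ (i + 1)), g t) ^ m) a b) {γ : ℝ}
    (hγ : 0 ≤ γ)
    (hγf : ∀ i a b, 0 < prodIco f (κ i) (κ (i + 1)) a b → γ ≤ prodIco f (κ i) (κ (i + 1)) a b)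
    (p : ℕ) {w : ι → ℝ} (hw : ∑ i, w i = 0) :
    l1Norm (w ᵥ* prodIco f (κ (p * Fintype.card ι)) (κ ((p + 1) * Fintype.card ι)))
      ≤ (1 - Fintype.card ι * γ ^ Fintype.card ι) * l1Norm w := by
  have hle : ∀ i, ∀ t ≥ κ i, t ≥ κ 0 := fun i t ht => (hκ.monotone (Nat.zero_le i)).trans ht
  have h := l1Norm_vecMul_prodIco_le_of_isStronglyConnected hγ
    (fun i => prodIco_mem_rowStochastic (fun t ht => hf t (hle i t ht)) _)
    (fun i => prodIco_apply_self_pos (fun t ht => hf t (hle i t ht))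
      (fun t ht => hdiag t (hle i t ht)) (hκ i.lt_succ_self).le)
    (fun i => isStronglyConnected_prodIco (fun t ht => hf t (hle i t ht))
      (fun t ht => hdiag t (hle i t ht)) (fun t ht => hg t (hle i t ht))
      (isStronglyConnected_of_pow_apply_pos (fun u v => by
        rw [Matrix.sum_apply]
        exact sum_nonneg fun t ht => hgnn t (hle i t (mem_Ico.1 ht).1) u v) (hirr i)))
    hγf (p * Fintype.card ι) hw
  rwa [prodIco_prodIco f hκ.monotone (Nat.le_add_right _ _), ← Nat.succ_mul] at h

end positivity

section mixing

variable {ι : Type*} [Fintype ι] [DecidableEq ι] {P S : Matrix ι ι ℝ} {ω : ι → ℝ}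

def mixMatrix (ω : ι → ℝ) (P S : Matrix ι ι ℝ) : Matrix ι ι ℝ :=
  (1 - diagonal ω) * P + diagonal ω * S

theorem mixMatrix_apply (i l : ι) : mixMatrix ω P S i l = (1 - ω i) * P i l + ω i * S i l := by
  simp [mixMatrix, sub_mul, diagonal_mul]

theorem mixMatrix_mem_rowStochastic (hP : P ∈ rowStochastic ℝ ι) (hS : S ∈ rowStochastic ℝ ι)
    (hω : ∀ i, ω i ∈ Set.Icc 0 1) : mixMatrix ω P S ∈ rowStochastic ℝ ι := by
  refine mem_rowStochastic_iff_sum.2 ⟨fun i l => ?_, fun i => ?_⟩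
  · rw [mixMatrix_apply]
    exact add_nonneg (mul_nonneg (sub_nonneg.2 (hω i).2) (nonneg_of_mem_rowStochastic hP))
      (mul_nonneg (hω i).1 (nonneg_of_mem_rowStochastic hS))
  · simp only [mixMatrix_apply, sum_add_distrib, ← mul_sum, sum_row_of_mem_rowStochastic hP,
      sum_row_of_mem_rowStochastic hS]
    ring

theorem mixMatrix_apply_pos (hS : S ∈ rowStochastic ℝ ι) (hω : ∀ i, ω i ∈ Set.Ico 0 1)
    {i l : ι} (h : 0 < P i l) : 0 < mixMatrix ω P S i l := by
  rw [mixMatrix_apply]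
  exact add_pos_of_pos_of_nonneg (mul_pos (sub_pos.2 (hω i).2) h)
    (mul_nonneg (hω i).1 (nonneg_of_mem_rowStochastic hS))

theorem l1Norm_vecMul_mixMatrix_sub_le (hP : P ∈ rowStochastic ℝ ι)
    (hS : S ∈ rowStochastic ℝ ι) {Θ : ι → ℝ} (hΘ : ∀ i, 0 ≤ Θ i) (hΘsum : ∑ i, Θ i = 1)
    (hstat : Θ ᵥ* P = Θ) {ε : ℝ} (hω : ∀ i, ω i ∈ Set.Icc 0 ε) :
    l1Norm (Θ ᵥ* mixMatrix ω P S - Θ) ≤ 2 * ε := by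
  set v := Θ ᵥ* diagonal ω
  have hv : ∀ i, 0 ≤ v i := fun i => by
    simpa [v, vecMul_diagonal] using mul_nonneg (hΘ i) (hω i).1
  have hdiff : Θ ᵥ* mixMatrix ω P S - Θ = v ᵥ* S - v ᵥ* P := by
    simp only [v, vecMul_vecMul]
    rw [mixMatrix, sub_mul, one_mul, vecMul_add, vecMul_sub, hstat]
    abel
  have hvε : l1Norm v ≤ ε := by
    rw [l1Norm_of_nonneg hv, ← mul_one ε, ← hΘsum, mul_sum]
    exact sum_le_sum fun i _ => by
      simpa [v, vecMul_diagonal, mul_comm] using mul_le_mul_of_nonneg_left (hω i).2 (hΘ i)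
  rw [hdiff]
  linarith [l1Norm_sub_le (v ᵥ* S) (v ᵥ* P), l1Norm_vecMul_le hS v, l1Norm_vecMul_le hP v]

theorem exp_neg_mul_mul_mem_Icc {τ g : ℝ} (hg : g ∈ Set.Icc 0 1) (k : ℕ) :
    Real.exp (-(τ * k)) * g ∈ Set.Icc 0 (Real.exp (-τ) ^ k) := by
  rw [show -(τ * k) = k * -τ by ring, Real.exp_nat_mul]
  have hpow := pow_nonneg (Real.exp_pos (-τ)).le k
  exact ⟨mul_nonneg hpow hg.1, mul_le_of_le_one_right hpow hg.2⟩

end mixing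

/-- Asynchronous convergence: with `M̄ k = (I - W k) * P̄ k + W k * S k`,
where every `P̄ k` is row-stochastic with positive diagonal and `Θ P̄ k = Θ`, and with an
infinite sequence of non-overlapping intervals `[κ i, κ (i+1))` on each of which the sum
of the `P̄ k` is irreducible and every positive entry of the corresponding product of the
`M̄ k` is at least `γ > 0`, every row-stochastic initial vector `x` satisfies
`x ᵥ* M̄ k₀ * ⋯ * M̄ (k-1) → Θ` entrywise as `k → ∞`. -/
theorem asynchronous_swarm_convergence
    (n : ℕ) (hn : 1 ≤ n)
    (Θ : Fin n → ℝ) (hΘpos : ∀ i, 0 < Θ i) (hΘsum : ∑ i, Θ i = 1)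
    (k₀ : ℕ) (τ : ℝ) (hτ : 0 < τ)
    (Pbar S : ℕ → Matrix (Fin n) (Fin n) ℝ)
    (hPnn : ∀ k, k₀ ≤ k → ∀ i l, 0 ≤ Pbar k i l)
    (hProw : ∀ k, k₀ ≤ k → ∀ i, ∑ l, Pbar k i l = 1)
    (hSnn : ∀ k, k₀ ≤ k → ∀ i l, 0 ≤ S k i l)
    (hSrow : ∀ k, k₀ ≤ k → ∀ i, ∑ l, S k i l = 1)
    (G : ℕ → Fin n → ℝ)
    (hG : ∀ k i, 0 ≤ G k i ∧ G k i ≤ 1)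
    (ω : ℕ → Fin n → ℝ)
    (hω : ∀ k i, ω k i = Real.exp (-(τ * (k : ℝ))) * G k i)
    (Mbar : ℕ → Matrix (Fin n) (Fin n) ℝ)
    (hM : ∀ k, k₀ ≤ k →
      Mbar k = (1 - Matrix.diagonal (ω k)) * Pbar k + Matrix.diagonal (ω k) * S k)
    -- (i) positive diagonal and stationarity of `Θ` for every `P̄ k`
    (hPdiag : ∀ k, k₀ ≤ k → ∀ i, 0 < Pbar k i i)
    (hPstat : ∀ k, k₀ ≤ k → Θ ᵥ* Pbar k = Θ)
    -- (ii) an infinite sequence of non-overlapping intervals `[κ i, κ (i+1))` on each of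
    -- which the sum of the `P̄ k` is irreducible
    (κ : ℕ → ℕ) (hκmono : StrictMono κ) (hκ0 : k₀ ≤ κ 0)
    (hirr : ∀ i : ℕ, ∀ a b : Fin n, ∃ m : ℕ, 0 < m ∧
      0 < ((∑ k ∈ Finset.Ico (κ i) (κ (i + 1)), Pbar k) ^ m) a b)
    -- (iii) uniform positive lower bound on positive entries of the interval products
    (γ : ℝ) (hγ : 0 < γ)
    (hγlb : ∀ i : ℕ, ∀ a b : Fin n,
      0 < (((List.range (κ (i + 1) - κ i)).map (fun t => Mbar (κ i + t))).prod) a b →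
      γ ≤ (((List.range (κ (i + 1) - κ i)).map (fun t => Mbar (κ i + t))).prod) a b)
    (x : Fin n → ℝ) (hxnn : ∀ i, 0 ≤ x i) (hxsum : ∑ i, x i = 1) :
    ∀ i, Filter.Tendsto
      (fun k : ℕ =>
        (x ᵥ* ((List.range (k - k₀)).map (fun t => Mbar (k₀ + t))).prod) i)
      Filter.atTop (nhds (Θ i)) := by
  set q := Real.exp (-τ)
  have hq0 : 0 ≤ q := (Real.exp_pos _).le
  have hq1 : q < 1 := Real.exp_lt_one_iff.2 (neg_lt_zero.2 hτ)
  have hωq : ∀ k i, ω k i ∈ Set.Icc 0 (q ^ k) := fun k i =>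
    hω k i ▸ exp_neg_mul_mul_mem_Icc (hG k i) k
  have hP : ∀ k ≥ k₀, Pbar k ∈ rowStochastic ℝ (Fin n) := fun k hk =>
    mem_rowStochastic_iff_sum.2 ⟨hPnn k hk, hProw k hk⟩
  have hS : ∀ k ≥ k₀, S k ∈ rowStochastic ℝ (Fin n) := fun k hk =>
    mem_rowStochastic_iff_sum.2 ⟨hSnn k hk, hSrow k hk⟩
  have hMs : ∀ k ≥ k₀, Mbar k ∈ rowStochastic ℝ (Fin n) := fun k hk =>
    hM k hk ▸ mixMatrix_mem_rowStochastic (hP k hk) (hS k hk) fun i =>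
      Set.Icc_subset_Icc_right (pow_le_one₀ hq0 hq1.le) (hωq k i)
  have hMpos : ∀ k > k₀, ∀ i l, 0 < Pbar k i l → 0 < Mbar k i l := fun k hk i l h =>
    hM k hk.le ▸ mixMatrix_apply_pos (hS k hk.le) (fun i =>
      ⟨(hωq k i).1, (hωq k i).2.trans_lt (pow_lt_one₀ hq0 hq1 (by omega))⟩) h
  have hstat : ∀ k ≥ k₀, l1Norm (Θ ᵥ* Mbar k - Θ) ≤ 2 * q ^ k := fun k hk =>
    hM k hk ▸ l1Norm_vecMul_mixMatrix_sub_le (hP k hk) (hS k hk) (fun i => (hΘpos i).le) hΘsum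
      (hPstat k hk) (hωq k)
  -- shifting the intervals by one gives `k ≥ 1`, hence `ω k < 1`, on all of them
  have hκ' : StrictMono fun i => κ (i + 1) := hκmono.comp fun _ _ => Nat.succ_lt_succ
  have hk₀ : ∀ t ≥ κ 1, k₀ < t := fun t ht => (hκ0.trans_lt (hκmono one_pos)).trans_le ht
  have hblock := l1Norm_vecMul_prodIco_intervals_le hκ' (fun t ht => hMs t (hk₀ t ht).le)
    (fun t ht a => hMpos t (hk₀ t ht) a a (hPdiag t (hk₀ t ht).le a))
    (fun t ht => hPnn t (hk₀ t ht).le) (fun t ht => hMpos t (hk₀ t ht))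
    (fun i a b => (hirr (i + 1) a b).imp fun _ => And.right) hγ.le fun i => hγlb (i + 1)
  rw [Fintype.card_fin] at hblock
  exact tendsto_apply_of_tendsto_l1Norm_sub <|
    tendsto_l1Norm_vecMul_prodIco_sub hMs (fun i => (hΘpos i).le) hΘsum zero_le_two hq0 hq1 hstat
      (hκ'.comp fun _ _ h => Nat.mul_lt_mul_of_pos_right h hn)
      (hk₀ _ (hκ'.monotone (Nat.zero_le _))).le
      (sub_lt_self _ (mul_pos (Nat.cast_pos.2 hn) (pow_pos hγ n))) hblock hxnn hxsum
end

section
/- Let Θ ∈ ℝⁿ have all entries positive, let C be a symmetric n×n matrix with entries in {0,1} and all diagonal entries equal to 1, let n_k ∈ ℝⁿ be a vector of positive bin populations, let c be a matrix of positive flux bounds, and let ξ ∈ (0,1]ⁿ. Define Q by Q[i,l] = min(c[i,l]/(n_k[i]·Θ[l]), c[l,i]/(n_k[l]·Θ[i])) for all i ≠ l with C[i,l] = 1 and Q[i,l] = 0 for all i ≠ l with C[i,l] = 0, rescaled in two passes: first Q[i,l] ← max(ε'[i], ε'[l])·Q[i,l] where ε'[i] = min(ξ[i]/Σ_{l≠i}Θ[l]Q[i,l],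 1), then Q[i,l] ← min(ε[i], ε[l])·Q[i,l] where ε[i] = min(ξ[i]/Σ_{l≠i}Θ[l]Q[i,l], 1) is recomputed after the first pass. Then the resulting Q is symmetric and nonnegative, satisfies Σ_{l≠i} Θ[l]·Q[i,l] ≤ ξ[i] ≤ 1 for every i, and the matrix P defined by P[i,l] = Θ[l]·Q[i,l] for i ≠ l and P[i,i] = 1 − Σ_{l≠i} P[i,l] is row-stochastic with nonnegative entries, has P[i,i] ≥ 1 − ξ[i], and satisfies Θ[i]·P[i,l] = Θ[l]·P[l,i] for all i,l. -/
open Matrix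

/-- The two-pass flux-bounded construction: starting from
`Q₀ i l = min (c i l / (n_k i * Θ l)) (c l i / (n_k l * Θ i))` on connected off-diagonal
pairs (and `0` elsewhere), rescaling first by `max (ε' i) (ε' l)` and then by
`min (ε i) (ε l)` (where `ε'`, `ε` are the lowering factors `min (ξ i / ∑_{l≠i} Θ l Q i l) 1`
computed before and after the first pass) yields a symmetric nonnegative matrix `Q₂` with
`∑_{l≠i} Θ l * Q₂ i l ≤ ξ i ≤ 1`; the induced matrix `P` with off-diagonal entries
`Θ l * Q₂ i l` and diagonal `1 - ∑_{l≠i} P i l` is row-stochastic with nonnegative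
entries, satisfies `P i i ≥ 1 - ξ i`, and is reversible with respect to `Θ`. -/
theorem flux_bounded_construction
    (n : ℕ)
    (Θ : Fin n → ℝ) (hΘpos : ∀ i, 0 < Θ i)
    (C : Matrix (Fin n) (Fin n) ℝ)
    (hCsymm : ∀ i l, C i l = C l i)
    (hC01 : ∀ i l, C i l = 0 ∨ C i l = 1)
    (hCdiag : ∀ i, C i i = 1)
    (nk : Fin n → ℝ) (hnk : ∀ i, 0 < nk i)
    (c : Matrix (Fin n) (Fin n) ℝ) (hc : ∀ i l, 0 < c i l)
    (ξ : Fin n → ℝ) (hξ : ∀ i, 0 < ξ i ∧ ξ i ≤ 1)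
    (Q0 Q1 Q2 : Matrix (Fin n) (Fin n) ℝ)
    (hQ0 : ∀ i l, Q0 i l =
      if i = l then 0
      else if C i l = 1 then min (c i l / (nk i * Θ l)) (c l i / (nk l * Θ i))
      else 0)
    (ε' : Fin n → ℝ)
    (hε' : ∀ i, ε' i = min (ξ i / ∑ l ∈ ({i} : Finset (Fin n))ᶜ, Θ l * Q0 i l) 1)
    (hQ1 : ∀ i l, Q1 i l = max (ε' i) (ε' l) * Q0 i l)
    (ε : Fin n → ℝ)
    (hε : ∀ i, ε i = min (ξ i / ∑ l ∈ ({i} : Finset (Fin n))ᶜ, Θ l * Q1 i l) 1)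
    (hQ2 : ∀ i l, Q2 i l = min (ε i) (ε l) * Q1 i l)
    (P : Matrix (Fin n) (Fin n) ℝ)
    (hP : ∀ i l, P i l =
      if i = l then 1 - ∑ m ∈ ({i} : Finset (Fin n))ᶜ, Θ m * Q2 i m
      else Θ l * Q2 i l) :
    ((∀ i l, Q2 i l = Q2 l i) ∧ (∀ i l, 0 ≤ Q2 i l)) ∧
    (∀ i, (∑ l ∈ ({i} : Finset (Fin n))ᶜ, Θ l * Q2 i l) ≤ ξ i ∧ ξ i ≤ 1) ∧
    ((∀ i l, 0 ≤ P i l) ∧ (∀ i, ∑ l, P i l = 1)) ∧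
    (∀ i, 1 - ξ i ≤ P i i) ∧
    (∀ i l, Θ i * P i l = Θ l * P l i) := by
  have hQ0nn : ∀ i l, 0 ≤ Q0 i l := by
    intro i l
    rw [hQ0 i l]
    split_ifs
    · exact le_refl 0
    · exact le_min (div_nonneg (hc i l).le (mul_nonneg (hnk i).le (hΘpos l).le))
        (div_nonneg (hc l i).le (mul_nonneg (hnk l).le (hΘpos i).le))
    · exact le_refl 0
  have hQ0symm : ∀ i l, Q0 i l = Q0 l i := by
    intro i l
    rw [hQ0 i l, hQ0 l i, hCsymm i l]
    by_cases h : i = l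
    · subst h; simp
    · simp [h, Ne.symm h, min_comm]
  have hS0nn : ∀ i, 0 ≤ ∑ l ∈ ({i} : Finset (Fin n))ᶜ, Θ l * Q0 i l := fun i =>
    Finset.sum_nonneg fun l _ => mul_nonneg (hΘpos l).le (hQ0nn i l)
  have hε'nn : ∀ i, 0 ≤ ε' i := by
    intro i
    rw [hε' i]
    exact le_min (div_nonneg (hξ i).1.le (hS0nn i)) zero_le_one
  have hQ1nn : ∀ i l, 0 ≤ Q1 i l := fun i l => by
    rw [hQ1 i l]
    exact mul_nonneg (le_trans (hε'nn i) (le_max_left _ _)) (hQ0nn i l)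
  have hQ1symm : ∀ i l, Q1 i l = Q1 l i := fun i l => by
    rw [hQ1 i l, hQ1 l i, hQ0symm i l, max_comm]
  have hS1nn : ∀ i, 0 ≤ ∑ l ∈ ({i} : Finset (Fin n))ᶜ, Θ l * Q1 i l := fun i =>
    Finset.sum_nonneg fun l _ => mul_nonneg (hΘpos l).le (hQ1nn i l)
  have hεnn : ∀ i, 0 ≤ ε i := by
    intro i
    rw [hε i]
    exact le_min (div_nonneg (hξ i).1.le (hS1nn i)) zero_le_one
  have hQ2nn : ∀ i l, 0 ≤ Q2 i l := fun i l => by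
    rw [hQ2 i l]
    exact mul_nonneg (le_min (hεnn i) (hεnn l)) (hQ1nn i l)
  have hQ2symm : ∀ i l, Q2 i l = Q2 l i := fun i l => by
    rw [hQ2 i l, hQ2 l i, hQ1symm i l, min_comm]
  have hsum : ∀ i, (∑ l ∈ ({i} : Finset (Fin n))ᶜ, Θ l * Q2 i l) ≤ ξ i := by
    intro i
    have h1 : (∑ l ∈ ({i} : Finset (Fin n))ᶜ, Θ l * Q2 i l)
        ≤ ε i * ∑ l ∈ ({i} : Finset (Fin n))ᶜ, Θ l * Q1 i l := by
      rw [Finset.mul_sum]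
      apply Finset.sum_le_sum
      intro l _
      rw [hQ2 i l]
      calc Θ l * (min (ε i) (ε l) * Q1 i l) ≤ Θ l * (ε i * Q1 i l) := by
            apply mul_le_mul_of_nonneg_left _ (hΘpos l).le
            exact mul_le_mul_of_nonneg_right (min_le_left _ _) (hQ1nn i l)
        _ = ε i * (Θ l * Q1 i l) := by ring
    refine h1.trans ?_
    set S := ∑ l ∈ ({i} : Finset (Fin n))ᶜ, Θ l * Q1 i l with hS
    rcases eq_or_lt_of_le (hS1nn i) with h0 | h0
    · rw [hS, ← h0, mul_zero]; exact (hξ i).1.le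
    · have : ε i ≤ ξ i / S := by rw [hε i]; exact min_le_left _ _
      calc ε i * S ≤ (ξ i / S) * S := mul_le_mul_of_nonneg_right this h0.le
        _ = ξ i := div_mul_cancel₀ _ (ne_of_gt h0)
  have hPnn : ∀ i l, 0 ≤ P i l := by
    intro i l
    rw [hP i l]
    split_ifs with h
    · subst h
      have := hsum i
      linarith [(hξ i).2]
    · exact mul_nonneg (hΘpos l).le (hQ2nn i l)
  have hProw : ∀ i, ∑ l, P i l = 1 := by
    intro i
    have hsplit := Finset.sum_add_sum_compl ({i} : Finset (Fin n)) (fun l => P i l)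
    rw [Finset.sum_singleton] at hsplit
    have hoff : ∑ l ∈ ({i} : Finset (Fin n))ᶜ, P i l
        = ∑ l ∈ ({i} : Finset (Fin n))ᶜ, Θ l * Q2 i l := by
      apply Finset.sum_congr rfl
      intro l hl
      rw [Finset.mem_compl, Finset.mem_singleton] at hl
      rw [hP i l, if_neg (Ne.symm hl)]
    rw [hoff] at hsplit
    rw [← hsplit, hP i i, if_pos rfl]
    ring
  refine ⟨⟨hQ2symm, hQ2nn⟩, fun i => ⟨hsum i, (hξ i).2⟩, ⟨hPnn, hProw⟩, ?_, ?_⟩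
  · intro i
    rw [hP i i, if_pos rfl]
    linarith [hsum i]
  · intro i l
    by_cases h : i = l
    · subst h; rfl
    · rw [hP i l, if_neg h, hP l i, if_neg (Ne.symm h), hQ2symm i l]
      ring
end
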